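/- arXiv:2007.02614 — 3 statements merged into one kernel-verified Lean document; each statement's English description precedes it below -/
import Mathlib

section
/- Let V be an n-dimensional real inner product space and A : V × V × V → ℝ a symmetric trilinear form. Let e₁ be a unit vector at which the function F(v) = A(v,v,v) attains its maximum over the unit sphere of V, and set μ₁ = A(e₁,e₁,e₁). Then there exist an orthonormal basis {e₁, e₂, …, e_n} of V extending e₁ and real numbers μ₁, μ₂, …, μ_n such that: (i) A(e₁, e_i, e_j) = μ_i δ_{ij} for all 1 ≤ i, j ≤ n; (ii) μ₁ ≥ 2μ_i for every i ≥ 2, and whenever μ₁ = 2μ_i for some i ≥ 2, then A(e_i, e_i, e_i) = 0. -/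
/-!
Restricted to the great circle through `e₁` and a unit vector `v ⊥ e₁`, parametrised rationally
by `t ↦ ((1 - t²) e₁ + 2t v) / (1 + t²)`, maximality of `F` at `e₁` says that a polynomial in `t`
is nonnegative and vanishes at `t = 0`. Hence its `t`-coefficient `-6 A(e₁,e₁,v)` vanishes, its
`t²`-coefficient `6 (μ₁ - 2 A(e₁,v,v))` is nonnegative, and when the latter is zero so is the
`t³`-coefficient `-8 A(v,v,v)`. The remaining `e_i` form an orthonormal eigenbasis of the
symmetric form `A(e₁,·,·)` on `e₁ᗮ`.
-/

open Filter Topology Module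

theorem nonneg_of_forall_nonneg_pow_mul {f : ℝ → ℝ} (hf : ContinuousAt f 0) (k : ℕ)
    (h : ∀ t, 0 ≤ t ^ k * f t) : 0 ≤ f 0 :=
  ge_of_tendsto (hf.tendsto.mono_left nhdsWithin_le_nhds : Tendsto f (𝓝[>] 0) _)
    (eventually_nhdsWithin_of_forall fun t (ht : 0 < t) =>
      nonneg_of_mul_nonneg_right (h t) (pow_pos ht k))

theorem eq_zero_of_forall_nonneg_odd_pow_mul {f : ℝ → ℝ} (hf : ContinuousAt f 0) {k : ℕ}
    (hk : Odd k) (h : ∀ t, 0 ≤ t ^ k * f t) : f 0 = 0 := by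
  have hneg : 0 ≤ -f (-0) :=
    nonneg_of_forall_nonneg_pow_mul (f := fun t => -f (-t))
      (hf.comp_of_eq continuous_neg.continuousAt neg_zero).neg k
      fun t => by simpa [hk.neg_pow] using h (-t)
  rw [neg_zero] at hneg
  linarith [nonneg_of_forall_nonneg_pow_mul hf k h]

-- `(x, y) = (1 - t², 2t)` runs over the circle of radius `1 + t²`, so this is
-- `μ x³ + 3b x²y + 3m xy² + a y³ ≤ μ (x² + y²)^(3/2)` with everything kept polynomial.
theorem binary_cubic_coeffs_of_le (μ b m a : ℝ)
    (h : ∀ t : ℝ, (1 - t ^ 2) ^ 3 * μ + 3 * (1 - t ^ 2) ^ 2 * (2 * t) * b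
      + 3 * (1 - t ^ 2) * (2 * t) ^ 2 * m + (2 * t) ^ 3 * a ≤ (1 + t ^ 2) ^ 3 * μ) :
    b = 0 ∧ 2 * m ≤ μ ∧ (μ = 2 * m → a = 0) := by
  have hb : b = 0 := by
    have := eq_zero_of_forall_nonneg_odd_pow_mul (k := 1)
      (f := fun t => -6 * b + t * (6 * μ - 12 * m + t * (12 * b - 8 * a
        + t * (12 * m - 6 * b * t + 2 * μ * t ^ 2)))) (by fun_prop) odd_one
      fun t => by linear_combination h t
    linarith
  subst hb
  have hm := nonneg_of_forall_nonneg_pow_mul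
    (f := fun t => 6 * μ - 12 * m + t * (-8 * a + t * (12 * m + 2 * μ * t ^ 2))) (by fun_prop) 2
    fun t => by linear_combination h t
  refine ⟨rfl, by linarith, fun hμ => ?_⟩
  subst hμ
  have := eq_zero_of_forall_nonneg_odd_pow_mul (k := 3)
    (f := fun t => -8 * a + t * (12 * m + 4 * m * t ^ 2)) (by fun_prop) (by decide)
    fun t => by linear_combination h t
  linarith

section Trilinear

variable {V : Type*} [NormedAddCommGroup V] [InnerProductSpace ℝ V]
  (A : V →ₗ[ℝ] V →ₗ[ℝ] V →ₗ[ℝ] ℝ)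

theorem trilinear_apply_smul_smul_smul (c : ℝ) (u : V) :
    A (c • u) (c • u) (c • u) = c ^ 3 * A u u u := by
  simp only [map_smul, LinearMap.smul_apply, smul_eq_mul]
  ring

theorem trilinear_apply_le_norm_pow_mul {e : V}
    (hmax : ∀ v : V, ‖v‖ = 1 → A v v v ≤ A e e e) (u : V) :
    A u u u ≤ ‖u‖ ^ 3 * A e e e := by
  rcases eq_or_ne u 0 with rfl | hu
  · simp
  have hnorm : 0 < ‖u‖ ^ 3 := by positivity
  have := hmax _ (norm_smul_inv_norm (𝕜 := ℝ) hu)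
  rwa [trilinear_apply_smul_smul_smul, RCLike.ofReal_real_eq_id, id, inv_pow,
    inv_mul_le_iff₀ hnorm] at this

theorem symm_trilinear_apply_add_cube
    (hsym₁ : ∀ u v w, A u v w = A v u w) (hsym₂ : ∀ u v w, A u v w = A u w v)
    (x y : ℝ) (e v : V) :
    A (x • e + y • v) (x • e + y • v) (x • e + y • v) =
      x ^ 3 * A e e e + 3 * x ^ 2 * y * A e e v + 3 * x * y ^ 2 * A e v v + y ^ 3 * A v v v := by
  have hvee : A v e e = A e e v := by rw [hsym₁, hsym₂]
  have heve : A e v e = A e e v := hsym₂ e v e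
  have hvev : A v e v = A e v v := hsym₁ v e v
  have hvve : A v v e = A e v v := by rw [hsym₂, hsym₁]
  simp only [map_add, map_smul, LinearMap.add_apply, LinearMap.smul_apply, smul_eq_mul,
    hvee, heve, hvev, hvve]
  ring

theorem norm_one_sub_sq_smul_add_two_mul_smul {e v : V} (he : ‖e‖ = 1) (hv : ‖v‖ = 1) (hev : inner ℝ e v = 0)
    (t : ℝ) : ‖(1 - t ^ 2) • e + (2 * t) • v‖ = 1 + t ^ 2 := by
  have hsq := norm_add_sq_eq_norm_sq_add_norm_sq_of_inner_eq_zero ((1 - t ^ 2) • e) ((2 * t) • v)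
    (by rw [real_inner_smul_left, real_inner_smul_right, hev, mul_zero, mul_zero])
  rw [norm_smul, norm_smul, he, hv, Real.norm_eq_abs, Real.norm_eq_abs] at hsq
  have : ‖(1 - t ^ 2) • e + (2 * t) • v‖ ^ 2 = (1 + t ^ 2) ^ 2 := by
    nlinarith [abs_mul_abs_self (1 - t ^ 2), abs_mul_abs_self (2 * t)]
  exact (sq_eq_sq₀ (norm_nonneg _) (by positivity)).mp this

theorem symm_trilinear_maximizer_conditions
    (hsym₁ : ∀ u v w, A u v w = A v u w) (hsym₂ : ∀ u v w, A u v w = A u w v)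
    {e : V} (he : ‖e‖ = 1) (hmax : ∀ v : V, ‖v‖ = 1 → A v v v ≤ A e e e)
    {v : V} (hv : ‖v‖ = 1) (hev : inner ℝ e v = 0) :
    A e e v = 0 ∧ 2 * A e v v ≤ A e e e ∧ (A e e e = 2 * A e v v → A v v v = 0) := by
  refine binary_cubic_coeffs_of_le _ _ _ _ fun t => ?_
  have := trilinear_apply_le_norm_pow_mul A hmax ((1 - t ^ 2) • e + (2 * t) • v)
  rwa [symm_trilinear_apply_add_cube A hsym₁ hsym₂,
    norm_one_sub_sq_smul_add_two_mul_smul he hv hev] at this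

end Trilinear

theorem exists_orthonormalBasis_diagonalizing {E : Type*} [NormedAddCommGroup E]
    [InnerProductSpace ℝ E] [FiniteDimensional ℝ E] {m : ℕ} (hm : finrank ℝ E = m)
    (B : E →ₗ[ℝ] E →ₗ[ℝ] ℝ) (hB : ∀ x y, B x y = B y x) :
    ∃ (b : OrthonormalBasis (Fin m) ℝ E) (μ : Fin m → ℝ),
      ∀ i j, B (b i) (b j) = if i = j then μ i else 0 := by
  let T : E →ₗ[ℝ] E :=
    { toFun := fun x => (InnerProductSpace.toDual ℝ E).symm (B x).toContinuousLinearMap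
      map_add' := fun x y => by simp
      map_smul' := fun r x => by simp }
  have hT : ∀ x y, inner ℝ (T x) y = B x y := fun x y => by simp [T]
  have hTsymm : T.IsSymmetric := fun x y => by rw [hT, real_inner_comm, hT, hB]
  refine ⟨hTsymm.eigenvectorBasis hm, hTsymm.eigenvalues hm, fun i j => ?_⟩
  rw [← hT, hTsymm.apply_eigenvectorBasis, real_inner_smul_left,
    orthonormal_iff_ite.mp (hTsymm.eigenvectorBasis hm).orthonormal]
  split_ifs <;> simp

theorem exists_orthonormalBasis_cons {V : Type*} [NormedAddCommGroup V] [InnerProductSpace ℝ V]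
    [FiniteDimensional ℝ V] {m : ℕ} (hdim : finrank ℝ V = m + 1) {e : V} (he : ‖e‖ = 1)
    (c : OrthonormalBasis (Fin m) ℝ (ℝ ∙ e)ᗮ) :
    ∃ b : OrthonormalBasis (Fin (m + 1)) ℝ V, ⇑b = Fin.cons e fun i => (c i : V) := by
  have horth : ∀ i, inner ℝ e (c i : V) = 0 := fun i =>
    Submodule.mem_orthogonal_singleton_iff_inner_right.mp (c i).2
  have hon : Orthonormal ℝ (Fin.cons e fun i => (c i : V) : Fin (m + 1) → V) := by
    rw [orthonormal_iff_ite]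
    intro i j
    cases i using Fin.cases <;> cases j using Fin.cases
    · simp [he]
    · simp [horth, (Fin.succ_ne_zero _).symm]
    · simp [real_inner_comm, horth, Fin.succ_ne_zero]
    · simp [← Submodule.coe_inner, orthonormal_iff_ite.mp c.orthonormal]
  have hspan := hon.linearIndependent.span_eq_top_of_card_eq_finrank (by simp [hdim])
  exact ⟨OrthonormalBasis.mk hon hspan.ge, OrthonormalBasis.coe_mk _ _⟩

/-- the typical (Ejiri) orthonormal basis adapted to a symmetric trilinear
form on an inner product space, built from a maximizer of `F(v) = A(v,v,v)` on the unit
sphere. -/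
theorem stmt4 {V : Type*} [NormedAddCommGroup V] [InnerProductSpace ℝ V]
    [FiniteDimensional ℝ V] {n : ℕ} (hn : 0 < n)
    (hdim : Module.finrank ℝ V = n)
    (A : V →ₗ[ℝ] V →ₗ[ℝ] V →ₗ[ℝ] ℝ)
    (hsym₁ : ∀ u v w, A u v w = A v u w)
    (hsym₂ : ∀ u v w, A u v w = A u w v)
    (e₁ : V) (he₁ : ‖e₁‖ = 1)
    (hmax : ∀ v : V, ‖v‖ = 1 → A v v v ≤ A e₁ e₁ e₁) :
    ∃ b : OrthonormalBasis (Fin n) ℝ V, ∃ μ : Fin n → ℝ,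
      b ⟨0, hn⟩ = e₁ ∧ μ ⟨0, hn⟩ = A e₁ e₁ e₁ ∧
      (∀ i j : Fin n, A e₁ (b i) (b j) = if i = j then μ i else 0) ∧
      (∀ i : Fin n, i ≠ ⟨0, hn⟩ →
        2 * μ i ≤ μ ⟨0, hn⟩ ∧ (μ ⟨0, hn⟩ = 2 * μ i → A (b i) (b i) (b i) = 0)) := by
  obtain ⟨m, rfl⟩ : ∃ m, n = m + 1 := ⟨n - 1, (Nat.succ_pred_eq_of_pos hn).symm⟩
  have : Fact (finrank ℝ V = m + 1) := ⟨hdim⟩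
  have he₁0 : e₁ ≠ 0 := norm_ne_zero_iff.mp (by rw [he₁]; exact one_ne_zero)
  obtain ⟨c, ν, hc⟩ := exists_orthonormalBasis_diagonalizing
    (Submodule.finrank_orthogonal_span_singleton (𝕜 := ℝ) (n := m) he₁0)
    ((A e₁).compl₁₂ (ℝ ∙ e₁)ᗮ.subtype (ℝ ∙ e₁)ᗮ.subtype) fun x y => hsym₂ _ _ _
  obtain ⟨b, hb⟩ := exists_orthonormalBasis_cons hdim he₁ c
  have hcond (i : Fin m) := symm_trilinear_maximizer_conditions A hsym₁ hsym₂ he₁ hmax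
    (v := c i) (c.orthonormal.1 i) (Submodule.mem_orthogonal_singleton_iff_inner_right.mp (c i).2)
  refine ⟨b, Fin.cons (A e₁ e₁ e₁) ν, by simp [hb], rfl, fun i j => ?_, fun i hi => ?_⟩
  · cases i using Fin.cases <;> cases j using Fin.cases
    · simp [hb]
    · simp [hb, (hcond _).1, (Fin.succ_ne_zero _).symm]
    · simp [hb, hsym₂ e₁ _ e₁, (hcond _).1, Fin.succ_ne_zero]
    · simpa [hb] using hc _ _
  · obtain ⟨i, rfl⟩ := Fin.exists_succ_eq.mpr hi
    have hνi : A e₁ (c i) (c i) = ν i := by simpa using hc i i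
    simpa [hb, hνi] using (hcond i).2
end

section
/- Let f be a smooth strictly convex function on a connected open domain Ω ⊆ ℝⁿ whose Fubini–Pick form is parallel (∇A = 0). If at some point p ∈ Ω the maximum of A_p(v,v,v) over the G_p-unit sphere equals 0 (Case 𝔠₀), then the Fubini–Pick form vanishes identically on Ω, all third partial derivatives of f vanish on Ω, f is a strictly convex quadratic polynomial, and the graph of f is Calabi affine equivalent to an open part of an elliptic paraboloid. -/
open scoped BigOperators
open Real Set

noncomputable section

/-- The partial derivative `∂g/∂x_i`. -/
def pd {n : ℕ} (i : Fin n) (g : (Fin n → ℝ) → ℝ) : (Fin n → ℝ) → ℝ :=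
  fun x => fderiv ℝ g x (Pi.single i 1)

/-- The Hessian matrix `(f_{ij}) = (∂²f/∂x_i∂x_j)`. -/
def hessMat {n : ℕ} (f : (Fin n → ℝ) → ℝ) (x : Fin n → ℝ) : Matrix (Fin n) (Fin n) ℝ :=
  Matrix.of fun i j => pd i (pd j f) x

/-- The inverse Hessian matrix `(f^{ij})`. -/
def hessInv {n : ℕ} (f : (Fin n → ℝ) → ℝ) (x : Fin n → ℝ) : Matrix (Fin n) (Fin n) ℝ :=
  (hessMat f x)⁻¹

/-- Third partial derivatives `f_{ijk}`. -/
def f3 {n : ℕ} (f : (Fin n → ℝ) → ℝ) (i j k : Fin n) : (Fin n → ℝ) → ℝ :=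
  pd i (pd j (pd k f))

/-- Christoffel symbols `Γ^k_{ij} = (1/2) Σ_l f^{kl} f_{ijl}` of the Calabi metric. -/
def Gamma {n : ℕ} (f : (Fin n → ℝ) → ℝ) (k i j : Fin n) : (Fin n → ℝ) → ℝ :=
  fun x => (1 / 2) * ∑ l, hessInv f x k l * f3 f i j l x

/-- The Fubini–Pick (cubic) form components `A_{ijk} = -(1/2) f_{ijk}`. -/
def FP {n : ℕ} (f : (Fin n → ℝ) → ℝ) (i j k : Fin n) : (Fin n → ℝ) → ℝ :=
  fun x => -(1 / 2) * f3 f i j k x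

/-- The covariant derivative `A_{ijk,l}` of the Fubini–Pick form. -/
def FPcov {n : ℕ} (f : (Fin n → ℝ) → ℝ) (i j k l : Fin n) : (Fin n → ℝ) → ℝ :=
  fun x => pd l (FP f i j k) x -
    ∑ m, (Gamma f m l i x * FP f m j k x + Gamma f m l j x * FP f i m k x +
      Gamma f m l k x * FP f i j m x)

/-- The Fubini–Pick form is parallel on `Ω`: `A_{ijk,l} = 0` identically. -/
def ParallelFP {n : ℕ} (f : (Fin n → ℝ) → ℝ) (Ω : Set (Fin n → ℝ)) : Prop :=
  ∀ i j k l : Fin n, ∀ x ∈ Ω, FPcov f i j k l x = 0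

/-- The Riemann curvature tensor `R^l_{kij}` of the Calabi metric. -/
def RiemUp {n : ℕ} (f : (Fin n → ℝ) → ℝ) (l k i j : Fin n) : (Fin n → ℝ) → ℝ :=
  fun x => pd i (Gamma f l j k) x - pd j (Gamma f l i k) x +
    ∑ m, (Gamma f l i m x * Gamma f m j k x - Gamma f l j m x * Gamma f m i k x)

/-- The Riemann curvature tensor with lowered indices `R_{ijkl} = Σ_m f_{lm} R^m_{kij}`. -/
def Riem {n : ℕ} (f : (Fin n → ℝ) → ℝ) (i j k l : Fin n) : (Fin n → ℝ) → ℝ :=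
  fun x => ∑ m, hessMat f x l m * RiemUp f m k i j x

/-- The Calabi metric is flat on `Ω`. -/
def FlatCalabi {n : ℕ} (f : (Fin n → ℝ) → ℝ) (Ω : Set (Fin n → ℝ)) : Prop :=
  ∀ i j k l : Fin n, ∀ x ∈ Ω, Riem f i j k l x = 0

/-- The Ricci tensor `R_{jk} = Σ_i R^i_{kij}` of the Calabi metric. -/
def RicciC {n : ℕ} (f : (Fin n → ℝ) → ℝ) (j k : Fin n) : (Fin n → ℝ) → ℝ :=
  fun x => ∑ i, RiemUp f i k i j x

/-- The scalar curvature `R = Σ f^{jk} R_{jk}` of the Calabi metric. -/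
def ScalC {n : ℕ} (f : (Fin n → ℝ) → ℝ) : (Fin n → ℝ) → ℝ :=
  fun x => ∑ j, ∑ k, hessInv f x j k * RicciC f j k x

/-- The inner product `G_p(u,v) = Σ f_{ij}(p) u_i v_j`. -/
def Gp {n : ℕ} (f : (Fin n → ℝ) → ℝ) (p u v : Fin n → ℝ) : ℝ :=
  ∑ i, ∑ j, hessMat f p i j * u i * v j

/-- The symmetric trilinear form `A_p(u,v,w) = Σ A_{ijk}(p) u_i v_j w_k`. -/
def Ap {n : ℕ} (f : (Fin n → ℝ) → ℝ) (p u v w : Fin n → ℝ) : ℝ :=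
  ∑ i, ∑ j, ∑ k, FP f i j k p * u i * v j * w k

/-- The graph of `f` over `Ω` is Calabi affine equivalent to an open part of the graph of
`g` over `D`: there are an invertible affine transformation `φ` of `ℝⁿ` with `φ(Ω) ⊆ D`
and constants `a₁,…,aₙ,b` with `g(φ(x)) = f(x) + Σ aⱼ xⱼ + b` on `Ω`. -/
def CalabiEquivOpenPart {n : ℕ} (f : (Fin n → ℝ) → ℝ) (Ω : Set (Fin n → ℝ))
    (g : (Fin n → ℝ) → ℝ) (D : Set (Fin n → ℝ)) : Prop :=
  ∃ φ : (Fin n → ℝ) ≃ᵃ[ℝ] (Fin n → ℝ), ∃ a : Fin n → ℝ, ∃ b : ℝ,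
    φ '' Ω ⊆ D ∧ ∀ x ∈ Ω, g (φ x) = f x + (∑ j, a j * x j) + b

/-- The function `Q(c₁,…,c_r;n)(x) = -Σ_{i<r} cᵢ ln xᵢ + (1/2) Σ_{j≥r} xⱼ²`
(indices written 0-based). -/
def Qfun (n r : ℕ) (c : Fin n → ℝ) : (Fin n → ℝ) → ℝ :=
  fun x => -(∑ i : Fin n, if (i : ℕ) < r then c i * Real.log (x i) else 0) +
    (1 / 2) * ∑ j : Fin n, if r ≤ (j : ℕ) then (x j) ^ 2 else 0

/-- The domain of `Q(c₁,…,c_r;n)`: the first `r` coordinates are positive. -/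
def Qdom (n r : ℕ) : Set (Fin n → ℝ) := {x | ∀ i : Fin n, (i : ℕ) < r → 0 < x i}

/-- The elliptic paraboloid is the graph of `(1/2) Σ xⱼ²`. -/
def paraboloid (n : ℕ) : (Fin n → ℝ) → ℝ := fun x => (1 / 2) * ∑ j, (x j) ^ 2



/-! ### Auxiliary lemmas -/

section Auxiliary

lemma pd_contDiffOn {n : ℕ} {Ω : Set (Fin n → ℝ)} (hΩo : IsOpen Ω)
    {g : (Fin n → ℝ) → ℝ} (hg : ContDiffOn ℝ (⊤ : ℕ∞) g Ω) (i : Fin n) :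
    ContDiffOn ℝ (⊤ : ℕ∞) (pd i g) Ω :=
  (ContinuousLinearMap.apply ℝ ℝ (Pi.single i 1)).contDiff.comp_contDiffOn
    (hg.fderiv_of_isOpen hΩo (by simp))

lemma f3_contDiffOn {n : ℕ} {Ω : Set (Fin n → ℝ)} (hΩo : IsOpen Ω)
    {f : (Fin n → ℝ) → ℝ} (hf : ContDiffOn ℝ (⊤ : ℕ∞) f Ω) (i j k : Fin n) :
    ContDiffOn ℝ (⊤ : ℕ∞) (f3 f i j k) Ω :=
  pd_contDiffOn hΩo (pd_contDiffOn hΩo (pd_contDiffOn hΩo hf k) j) i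

lemma FP_contDiffOn {n : ℕ} {Ω : Set (Fin n → ℝ)} (hΩo : IsOpen Ω)
    {f : (Fin n → ℝ) → ℝ} (hf : ContDiffOn ℝ (⊤ : ℕ∞) f Ω) (i j k : Fin n) :
    ContDiffOn ℝ (⊤ : ℕ∞) (FP f i j k) Ω :=
  contDiffOn_const.mul (f3_contDiffOn hΩo hf i j k)

lemma fderiv_eq_sum_pd {n : ℕ} {g : (Fin n → ℝ) → ℝ} {x : Fin n → ℝ}
    (v : Fin n → ℝ) : fderiv ℝ g x v = ∑ i, v i * pd i g x := by
  have hv : v = ∑ i, v i • (Pi.single i 1 : Fin n → ℝ) := by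
    ext j; simp [Pi.single_apply]
  conv_lhs => rw [hv]
  rw [map_sum]
  simp [pd, smul_eq_mul]

lemma pd_pd_eq {n : ℕ} {Ω : Set (Fin n → ℝ)} (hΩo : IsOpen Ω)
    {g : (Fin n → ℝ) → ℝ} (hg : ContDiffOn ℝ (⊤ : ℕ∞) g Ω) {x : Fin n → ℝ} (hx : x ∈ Ω)
    (i j : Fin n) :
    pd i (pd j g) x = fderiv ℝ (fderiv ℝ g) x (Pi.single i 1) (Pi.single j 1) := by
  have hD : HasFDerivAt (fderiv ℝ g) (fderiv ℝ (fderiv ℝ g) x) x :=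
    ((((hg x hx).contDiffAt (hΩo.mem_nhds hx)).fderiv_right (m := 1) (WithTop.coe_le_coe.2 le_top)).differentiableAt
      one_ne_zero).hasFDerivAt
  have h2 : HasFDerivAt (fun y => fderiv ℝ g y (Pi.single j 1))
      ((ContinuousLinearMap.apply ℝ ℝ ((Pi.single j 1 : Fin n → ℝ))).comp
        (fderiv ℝ (fderiv ℝ g) x)) x :=
    (ContinuousLinearMap.apply ℝ ℝ ((Pi.single j 1 : Fin n → ℝ))).hasFDerivAt.comp x hD
  show fderiv ℝ (fun y => fderiv ℝ g y (Pi.single j 1)) x (Pi.single i 1) = _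
  rw [h2.fderiv]
  rfl

lemma pd_pd_symm {n : ℕ} {Ω : Set (Fin n → ℝ)} (hΩo : IsOpen Ω)
    {g : (Fin n → ℝ) → ℝ} (hg : ContDiffOn ℝ (⊤ : ℕ∞) g Ω) {x : Fin n → ℝ} (hx : x ∈ Ω)
    (i j : Fin n) : pd i (pd j g) x = pd j (pd i g) x := by
  rw [pd_pd_eq hΩo hg hx, pd_pd_eq hΩo hg hx]
  exact ((hg x hx).contDiffAt (hΩo.mem_nhds hx)).isSymmSndFDerivAt (by rw [minSmoothness_of_isRCLikeNormedField]; exact WithTop.coe_le_coe.2 le_top) _ _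

lemma FP_symm12 {n : ℕ} {Ω : Set (Fin n → ℝ)} (hΩo : IsOpen Ω)
    {f : (Fin n → ℝ) → ℝ} (hf : ContDiffOn ℝ (⊤ : ℕ∞) f Ω) {x : Fin n → ℝ} (hx : x ∈ Ω)
    (i j k : Fin n) : FP f i j k x = FP f j i k x := by
  unfold FP f3
  rw [pd_pd_symm hΩo (pd_contDiffOn hΩo hf k) hx i j]

lemma FP_symm23 {n : ℕ} {Ω : Set (Fin n → ℝ)} (hΩo : IsOpen Ω)
    {f : (Fin n → ℝ) → ℝ} (hf : ContDiffOn ℝ (⊤ : ℕ∞) f Ω) {x : Fin n → ℝ} (hx : x ∈ Ω)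
    (i j k : Fin n) : FP f i j k x = FP f i k j x := by
  have hev : pd j (pd k f) =ᶠ[nhds x] pd k (pd j f) := by
    filter_upwards [hΩo.mem_nhds hx] with z hz using pd_pd_symm hΩo hf hz j k
  have h2 : f3 f i j k x = f3 f i k j x := by
    show fderiv ℝ (pd j (pd k f)) x (Pi.single i 1) =
      fderiv ℝ (pd k (pd j f)) x (Pi.single i 1)
    rw [hev.fderiv_eq]
  unfold FP
  rw [h2]

lemma clopen_globalize {n : ℕ} {Ω : Set (Fin n → ℝ)}
    (hΩc : IsPreconnected Ω) (S : Set (Fin n → ℝ))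
    (hSopen : ∀ z ∈ S ∩ Ω, ∃ ε > 0, Metric.ball z ε ⊆ Ω ∩ S)
    (hScl : ∀ z ∈ Ω, z ∈ closure S → z ∈ S)
    {p : Fin n → ℝ} (hpS : p ∈ S) (hpΩ : p ∈ Ω) : Ω ⊆ S := by
  set u : Set (Fin n → ℝ) := {z | ∃ ε > 0, Metric.ball z ε ⊆ Ω ∩ S} with hu_def
  have huS : u = S ∩ Ω := by
    apply Subset.antisymm
    · rintro z ⟨ε, hε, hball⟩
      have hz := hball (Metric.mem_ball_self hε)
      exact ⟨hz.2, hz.1⟩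
    · intro z hz; exact hSopen z hz
  have hu : IsOpen u := by
    rw [Metric.isOpen_iff]
    rintro z ⟨ε, hε, hball⟩
    refine ⟨ε / 2, by linarith, fun w hw => ⟨ε / 2, by linarith, fun y hy => ?_⟩⟩
    apply hball
    rw [Metric.mem_ball] at *
    calc dist y z ≤ dist y w + dist w z := dist_triangle _ _ _
      _ < ε := by linarith
  have hsub : Ω ⊆ u := by
    refine hΩc.subset_of_closure_inter_subset hu ⟨p, hpΩ, ?_⟩ ?_
    · rw [huS]; exact ⟨hpS, hpΩ⟩
    · intro z hz
      obtain ⟨hzc, hzΩ⟩ := hz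
      rw [huS]
      refine ⟨hScl z hzΩ ?_, hzΩ⟩
      have hcl : closure u ⊆ closure S :=
        closure_mono (by rw [huS]; exact inter_subset_left)
      exact hcl hzc
  intro z hz
  have hz2 := hsub hz
  rw [huS] at hz2
  exact hz2.1

lemma const_of_pd_zero {n : ℕ} {Ω : Set (Fin n → ℝ)} (hΩo : IsOpen Ω)
    (hΩc : IsPreconnected Ω) {g : (Fin n → ℝ) → ℝ}
    (hd : ∀ x ∈ Ω, DifferentiableAt ℝ g x)
    (h0 : ∀ x ∈ Ω, ∀ i, pd i g x = 0) {x y : Fin n → ℝ}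
    (hx : x ∈ Ω) (hy : y ∈ Ω) : g y = g x := by
  have hfz : ∀ z ∈ Ω, fderiv ℝ g z = 0 := by
    intro z hz
    ext v
    rw [ContinuousLinearMap.zero_apply, fderiv_eq_sum_pd]
    exact Finset.sum_eq_zero fun i _ => by rw [h0 z hz i, mul_zero]
  have hloc : ∀ z ∈ Ω, ∀ ε > 0, Metric.ball z ε ⊆ Ω →
      ∀ w ∈ Metric.ball z ε, g w = g z := by
    intro z hz ε hε hball w hw
    have hconv : Convex ℝ (Metric.ball z ε) := convex_ball z ε
    have hdiff : DifferentiableOn ℝ g (Metric.ball z ε) := fun w hw =>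
      (hd w (hball hw)).differentiableWithinAt
    refine hconv.is_const_of_fderivWithin_eq_zero hdiff ?_ hw (Metric.mem_ball_self hε)
    intro u hu
    rw [fderivWithin_of_isOpen Metric.isOpen_ball hu]
    exact hfz u (hball hu)
  set S : Set (Fin n → ℝ) := {z | g z = g x} with hS
  have hsub : Ω ⊆ S := by
    refine clopen_globalize hΩc S ?_ ?_ rfl hx
    · rintro z ⟨hzS, hzΩ⟩
      obtain ⟨ε, hε, hball⟩ := Metric.isOpen_iff.1 hΩo z hzΩ
      exact ⟨ε, hε, fun w hw => ⟨hball hw, by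
        show g w = g x
        rw [hloc z hzΩ ε hε hball w hw]; exact hzS⟩⟩
    · intro z hzΩ hzc
      have hc : ContinuousWithinAt g S z :=
        ((hd z hzΩ).continuousAt).continuousWithinAt
      have h1 := hc.mem_closure_image hzc
      have himg : g '' S ⊆ {g x} := by rintro _ ⟨w, hw, rfl⟩; exact hw
      have h2 : g z ∈ closure {g x} := closure_mono himg h1
      rwa [closure_singleton, mem_singleton_iff] at h2
  exact hsub hy

lemma hessMat_continuousOn {n : ℕ} {Ω : Set (Fin n → ℝ)} (hΩo : IsOpen Ω)
    {f : (Fin n → ℝ) → ℝ} (hf : ContDiffOn ℝ (⊤ : ℕ∞) f Ω) :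
    ContinuousOn (fun x => hessMat f x) Ω := by
  apply continuousOn_pi.2; intro i
  apply continuousOn_pi.2; intro j
  exact (pd_contDiffOn hΩo (pd_contDiffOn hΩo hf j) i).continuousOn

lemma hessInv_continuousOn {n : ℕ} {Ω : Set (Fin n → ℝ)} (hΩo : IsOpen Ω)
    {f : (Fin n → ℝ) → ℝ} (hf : ContDiffOn ℝ (⊤ : ℕ∞) f Ω)
    (hconv : ∀ x ∈ Ω, (hessMat f x).PosDef) (k l : Fin n) :
    ContinuousOn (fun x => hessInv f x k l) Ω := by
  have hdet : ContinuousOn (fun x => (hessMat f x).det) Ω :=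
    (continuous_id.matrix_det).comp_continuousOn (hessMat_continuousOn hΩo hf)
  have hadj : ContinuousOn (fun x => (hessMat f x).adjugate k l) Ω :=
    (((continuous_apply l).comp ((continuous_apply k).comp
      continuous_id.matrix_adjugate)).comp_continuousOn (hessMat_continuousOn hΩo hf))
  have hne : ∀ x ∈ Ω, (hessMat f x).det ≠ 0 := fun x hx => ne_of_gt (hconv x hx).det_pos
  have hco : ContinuousOn
      (fun x => ((hessMat f x).det)⁻¹ * (hessMat f x).adjugate k l) Ω :=
    (hdet.inv₀ hne).mul hadj
  refine hco.congr fun x hx => ?_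
  show hessInv f x k l = _
  rw [hessInv, Matrix.inv_def, Ring.inverse_eq_inv]
  simp [Matrix.smul_apply, smul_eq_mul]

lemma Gamma_continuousOn {n : ℕ} {Ω : Set (Fin n → ℝ)} (hΩo : IsOpen Ω)
    {f : (Fin n → ℝ) → ℝ} (hf : ContDiffOn ℝ (⊤ : ℕ∞) f Ω)
    (hconv : ∀ x ∈ Ω, (hessMat f x).PosDef) (k i j : Fin n) :
    ContinuousOn (Gamma f k i j) Ω := by
  apply ContinuousOn.mul continuousOn_const
  apply continuousOn_finset_sum
  intro l _
  exact (hessInv_continuousOn hΩo hf hconv k l).mul (f3_contDiffOn hΩo hf i j l).continuousOn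

section ApLemmas
variable {n : ℕ} {f : (Fin n → ℝ) → ℝ} {p : Fin n → ℝ}

lemma Ap_add1 (u u' v w : Fin n → ℝ) :
    Ap f p (u + u') v w = Ap f p u v w + Ap f p u' v w := by
  unfold Ap
  rw [← Finset.sum_add_distrib]
  refine Finset.sum_congr rfl fun i _ => ?_
  rw [← Finset.sum_add_distrib]
  refine Finset.sum_congr rfl fun j _ => ?_
  rw [← Finset.sum_add_distrib]
  refine Finset.sum_congr rfl fun k _ => ?_
  simp [Pi.add_apply]; ring

lemma Ap_add2 (u v v' w : Fin n → ℝ) :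
    Ap f p u (v + v') w = Ap f p u v w + Ap f p u v' w := by
  unfold Ap
  rw [← Finset.sum_add_distrib]
  refine Finset.sum_congr rfl fun i _ => ?_
  rw [← Finset.sum_add_distrib]
  refine Finset.sum_congr rfl fun j _ => ?_
  rw [← Finset.sum_add_distrib]
  refine Finset.sum_congr rfl fun k _ => ?_
  simp [Pi.add_apply]; ring

lemma Ap_add3 (u v w w' : Fin n → ℝ) :
    Ap f p u v (w + w') = Ap f p u v w + Ap f p u v w' := by
  unfold Ap
  rw [← Finset.sum_add_distrib]
  refine Finset.sum_congr rfl fun i _ => ?_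
  rw [← Finset.sum_add_distrib]
  refine Finset.sum_congr rfl fun j _ => ?_
  rw [← Finset.sum_add_distrib]
  refine Finset.sum_congr rfl fun k _ => ?_
  simp [Pi.add_apply]; ring

lemma Ap_neg2 (u v w : Fin n → ℝ) :
    Ap f p u (-v) w = - Ap f p u v w := by
  unfold Ap
  rw [← Finset.sum_neg_distrib]
  refine Finset.sum_congr rfl fun i _ => ?_
  rw [← Finset.sum_neg_distrib]
  refine Finset.sum_congr rfl fun j _ => ?_
  rw [← Finset.sum_neg_distrib]
  refine Finset.sum_congr rfl fun k _ => ?_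
  simp [Pi.neg_apply]

lemma Ap_neg3 (u v w : Fin n → ℝ) :
    Ap f p u v (-w) = - Ap f p u v w := by
  unfold Ap
  rw [← Finset.sum_neg_distrib]
  refine Finset.sum_congr rfl fun i _ => ?_
  rw [← Finset.sum_neg_distrib]
  refine Finset.sum_congr rfl fun j _ => ?_
  rw [← Finset.sum_neg_distrib]
  refine Finset.sum_congr rfl fun k _ => ?_
  simp [Pi.neg_apply]

lemma Ap_smul_all (c : ℝ) (u v w : Fin n → ℝ) :
    Ap f p (c • u) (c • v) (c • w) = c ^ 3 * Ap f p u v w := by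
  unfold Ap
  rw [Finset.mul_sum]
  refine Finset.sum_congr rfl fun i _ => ?_
  rw [Finset.mul_sum]
  refine Finset.sum_congr rfl fun j _ => ?_
  rw [Finset.mul_sum]
  refine Finset.sum_congr rfl fun k _ => ?_
  simp only [Pi.smul_apply, smul_eq_mul]; ring

lemma Gp_smul (c : ℝ) (u : Fin n → ℝ) :
    Gp f p (c • u) (c • u) = c ^ 2 * Gp f p u u := by
  unfold Gp
  rw [Finset.mul_sum]
  refine Finset.sum_congr rfl fun i _ => ?_
  rw [Finset.mul_sum]
  refine Finset.sum_congr rfl fun j _ => ?_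
  simp only [Pi.smul_apply, smul_eq_mul]; ring

end ApLemmas

lemma Ap_swap12 {n : ℕ} {Ω : Set (Fin n → ℝ)} (hΩo : IsOpen Ω)
    {f : (Fin n → ℝ) → ℝ} (hf : ContDiffOn ℝ (⊤ : ℕ∞) f Ω) {p : Fin n → ℝ} (hp : p ∈ Ω)
    (u v w : Fin n → ℝ) : Ap f p u v w = Ap f p v u w := by
  unfold Ap
  rw [Finset.sum_comm]
  refine Finset.sum_congr rfl fun i _ => Finset.sum_congr rfl fun j _ =>
    Finset.sum_congr rfl fun k _ => ?_
  rw [FP_symm12 hΩo hf hp j i k]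
  ring

lemma Ap_swap23 {n : ℕ} {Ω : Set (Fin n → ℝ)} (hΩo : IsOpen Ω)
    {f : (Fin n → ℝ) → ℝ} (hf : ContDiffOn ℝ (⊤ : ℕ∞) f Ω) {p : Fin n → ℝ} (hp : p ∈ Ω)
    (u v w : Fin n → ℝ) : Ap f p u v w = Ap f p u w v := by
  unfold Ap
  refine Finset.sum_congr rfl fun i _ => ?_
  rw [Finset.sum_comm]
  refine Finset.sum_congr rfl fun j _ => Finset.sum_congr rfl fun k _ => ?_
  rw [FP_symm23 hΩo hf hp i k j]
  ring

lemma Gp_pos {n : ℕ} {f : (Fin n → ℝ) → ℝ} {p : Fin n → ℝ}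
    (hpd : (hessMat f p).PosDef) {v : Fin n → ℝ} (hv : v ≠ 0) :
    0 < Gp f p v v := by
  have hp2 := hpd.dotProduct_mulVec_pos hv
  have heq : Gp f p v v =
      dotProduct (star v) (Matrix.mulVec (hessMat f p) v) := by
    unfold Gp
    rw [dotProduct]
    refine Finset.sum_congr rfl fun i _ => ?_
    rw [Matrix.mulVec, dotProduct, Finset.mul_sum]
    refine Finset.sum_congr rfl fun j _ => ?_
    simp [star, mul_comm, mul_assoc, mul_left_comm]
  rw [heq]
  exact hp2

lemma FP_p_zero {n : ℕ} {Ω : Set (Fin n → ℝ)} (hΩo : IsOpen Ω)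
    {f : (Fin n → ℝ) → ℝ} (hf : ContDiffOn ℝ (⊤ : ℕ∞) f Ω) {p : Fin n → ℝ} (hp : p ∈ Ω)
    (hpd : (hessMat f p).PosDef)
    (hmax0 : IsGreatest ((fun v => Ap f p v v v) '' {v | Gp f p v v = 1}) 0)
    (i j k : Fin n) : FP f i j k p = 0 := by
  have hsphere : ∀ v, Gp f p v v = 1 → Ap f p v v v = 0 := by
    intro v hv
    have h1 : Ap f p v v v ≤ 0 := hmax0.2 ⟨v, hv, rfl⟩
    have hnegv : Gp f p (-v) (-v) = 1 := by
      have := Gp_smul (f := f) (p := p) (-1) v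
      simpa [hv] using this
    have h2 : Ap f p (-v) (-v) (-v) ≤ 0 := hmax0.2 ⟨-v, hnegv, rfl⟩
    have h3 : Ap f p (-v) (-v) (-v) = - Ap f p v v v := by
      rw [show (-v : Fin n → ℝ) = (-1 : ℝ) • v by simp, Ap_smul_all]
      norm_num
    rw [h3] at h2
    linarith
  have hcube : ∀ v, Ap f p v v v = 0 := by
    intro v
    by_cases hv : v = 0
    · subst hv
      unfold Ap
      simp
    · have hq : 0 < Gp f p v v := Gp_pos hpd hv
      set c : ℝ := (Real.sqrt (Gp f p v v))⁻¹ with hc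
      have hsq : Real.sqrt (Gp f p v v) > 0 := Real.sqrt_pos.2 hq
      have hcv : Gp f p (c • v) (c • v) = 1 := by
        rw [Gp_smul, hc, inv_pow, Real.sq_sqrt (le_of_lt hq),
          inv_mul_cancel₀ (ne_of_gt hq)]
      have h0 : Ap f p (c • v) (c • v) (c • v) = 0 := hsphere _ hcv
      have hcexp : Ap f p (c • v) (c • v) (c • v) = c ^ 3 * Ap f p v v v :=
        Ap_smul_all c v v v
      rw [hcexp] at h0
      have hc0 : c ≠ 0 := inv_ne_zero (ne_of_gt hsq)
      have hc3 := pow_ne_zero 3 hc0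
      exact (mul_eq_zero.1 h0).resolve_left hc3
  have expand : ∀ u v : Fin n → ℝ, Ap f p (u + v) (u + v) (u + v) =
      Ap f p u u u + 3 * Ap f p u u v + 3 * Ap f p u v v + Ap f p v v v := by
    intro u v
    have h1 : Ap f p u v u = Ap f p u u v := by
      rw [Ap_swap23 hΩo hf hp u v u]
    have h2 : Ap f p v u u = Ap f p u u v := by
      rw [Ap_swap12 hΩo hf hp v u u, h1]
    have h3 : Ap f p v u v = Ap f p u v v := Ap_swap12 hΩo hf hp v u v
    have h4 : Ap f p v v u = Ap f p u v v := by
      rw [Ap_swap23 hΩo hf hp v v u, h3]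
    rw [Ap_add1, Ap_add2, Ap_add2, Ap_add3, Ap_add3, Ap_add3, Ap_add3, h1, h2, h3, h4]
    ring
  have huuv : ∀ u v : Fin n → ℝ, Ap f p u u v = 0 := by
    intro u v
    have e1 := expand u v
    have e2 := expand u (-v)
    have n1 : Ap f p u u (-v) = - Ap f p u u v := Ap_neg3 u u v
    have n2 : Ap f p u (-v) (-v) = Ap f p u v v := by
      rw [Ap_neg2, Ap_neg3]; ring
    have n3 : Ap f p (-v) (-v) (-v) = - Ap f p v v v := by
      rw [show (-v : Fin n → ℝ) = (-1 : ℝ) • v by simp, Ap_smul_all]; norm_num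
    have c0 := hcube u
    have c1 := hcube v
    have c2 := hcube (u + v)
    have c3 := hcube (u + -v)
    rw [c2, c0, c1] at e1
    rw [c3, n1, n2, n3, c0, c1] at e2
    linarith
  have hall : ∀ u w v : Fin n → ℝ, Ap f p u w v = 0 := by
    intro u w v
    have h0 := huuv (u + w) v
    have hexp : Ap f p (u + w) (u + w) v =
        Ap f p u u v + Ap f p u w v + Ap f p w u v + Ap f p w w v := by
      rw [Ap_add1, Ap_add2, Ap_add2]; ring
    have hsw : Ap f p w u v = Ap f p u w v := Ap_swap12 hΩo hf hp w u v
    have e1 := huuv u v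
    have e2 := huuv w v
    rw [h0] at hexp
    rw [hsw, e1, e2] at hexp
    linarith
  have hsingle : Ap f p (Pi.single i 1) (Pi.single j 1) (Pi.single k 1) = FP f i j k p := by
    unfold Ap
    simp [Pi.single_apply, mul_ite, ite_mul, Finset.sum_ite_eq', Finset.mem_univ]
  rw [← hsingle]
  exact hall _ _ _

lemma FP_zero_ball {n : ℕ} {Ω : Set (Fin n → ℝ)} (hΩo : IsOpen Ω)
    {f : (Fin n → ℝ) → ℝ} (hf : ContDiffOn ℝ (⊤ : ℕ∞) f Ω)
    (hconv : ∀ x ∈ Ω, (hessMat f x).PosDef) (hpar : ParallelFP f Ω)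
    {c : Fin n → ℝ} {r : ℝ}
    (hball : Metric.closedBall c r ⊆ Ω) (hc0 : ∀ i j k : Fin n, FP f i j k c = 0)
    {y : Fin n → ℝ} (hy : y ∈ Metric.closedBall c r) (i j k : Fin n) :
    FP f i j k y = 0 := by
  classical
  have hr0 : 0 ≤ r := le_trans dist_nonneg (Metric.mem_closedBall.1 hy)
  set Δ : Fin n → ℝ := y - c with hΔ
  set γ : ℝ → (Fin n → ℝ) := fun t => c + t • Δ with hγ
  have hγ0 : γ 0 = c := by simp [hγ]
  have hγ1 : γ 1 = y := by simp [hγ, hΔ]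
  have hγmem : ∀ t ∈ Icc (0:ℝ) 1, γ t ∈ Metric.closedBall c r := by
    intro t ht
    have hd : dist (γ t) c = |t| * ‖Δ‖ := by
      rw [dist_eq_norm]; simp [hγ, norm_smul, Real.norm_eq_abs]
    rw [Metric.mem_closedBall, hd]
    have ht' : |t| ≤ 1 := abs_le.2 ⟨by linarith [ht.1], ht.2⟩
    have h1 : ‖Δ‖ = dist y c := by rw [hΔ, dist_eq_norm]
    calc |t| * ‖Δ‖ ≤ 1 * ‖Δ‖ := mul_le_mul_of_nonneg_right ht' (norm_nonneg _)
      _ = dist y c := by rw [one_mul, h1]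
      _ ≤ r := Metric.mem_closedBall.1 hy
  have hγΩ : ∀ t ∈ Icc (0:ℝ) 1, γ t ∈ Ω := fun t ht => hball (hγmem t ht)
  -- bound on Gamma
  have hGcont : ContinuousOn (fun x (q : Fin n × Fin n × Fin n) =>
      Gamma f q.1 q.2.1 q.2.2 x) (Metric.closedBall c r) :=
    (continuousOn_pi.2 fun q => Gamma_continuousOn hΩo hf hconv _ _ _).mono hball
  obtain ⟨C, hC⟩ := (isCompact_closedBall c r).exists_bound_of_continuousOn hGcont
  have hΓ : ∀ (m l a : Fin n), ∀ x ∈ Metric.closedBall c r, |Gamma f m l a x| ≤ C := by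
    intro m l a x hx
    have := norm_le_pi_norm (fun q : Fin n × Fin n × Fin n =>
      Gamma f q.1 q.2.1 q.2.2 x) (m, l, a)
    simpa [Real.norm_eq_abs] using this.trans (hC x hx)
  set K : ℝ := (∑ l, |Δ l|) * ((n : ℝ) * (3 * C)) with hK
  set F : ℝ → (Fin n × Fin n × Fin n → ℝ) := fun t q => FP f q.1 q.2.1 q.2.2 (γ t) with hF
  have hFPle : ∀ t, ∀ u v w : Fin n, |FP f u v w (γ t)| ≤ ‖F t‖ := by
    intro t u v w
    have := norm_le_pi_norm (F t) (u, v, w)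
    simpa [Real.norm_eq_abs, hF] using this
  set F' : ℝ → (Fin n × Fin n × Fin n → ℝ) := fun t q => ∑ l, Δ l * (∑ m,
    (Gamma f m l q.1 (γ t) * FP f m q.2.1 q.2.2 (γ t) +
     Gamma f m l q.2.1 (γ t) * FP f q.1 m q.2.2 (γ t) +
     Gamma f m l q.2.2 (γ t) * FP f q.1 q.2.1 m (γ t))) with hF'
  have hγcont : Continuous γ := by
    apply continuous_const.add
    exact (continuous_id.smul continuous_const)
  have hFcont : ContinuousOn F (Icc 0 1) := by
    apply continuousOn_pi.2
    rintro ⟨i', j', k'⟩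
    exact ((FP_contDiffOn hΩo hf i' j' k').continuousOn.comp hγcont.continuousOn hγΩ)
  have hCnn : 0 ≤ C :=
    le_trans (norm_nonneg _) (hC c (Metric.mem_closedBall_self hr0))
  have hKnn : 0 ≤ K := by
    apply mul_nonneg
    · exact Finset.sum_nonneg fun l _ => abs_nonneg _
    · positivity
  have hderiv : ∀ t ∈ Ico (0:ℝ) 1, HasDerivWithinAt F (F' t) (Ici t) t := by
    intro t ht
    have htIcc : t ∈ Icc (0:ℝ) 1 := Ico_subset_Icc_self ht
    have hxΩ : γ t ∈ Ω := hγΩ t htIcc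
    have hγd : HasDerivAt γ Δ t := by
      have h1 : HasDerivAt (fun s : ℝ => s • Δ) ((1:ℝ) • Δ) t := (hasDerivAt_id t).smul_const Δ
      exact (by simpa using h1 : HasDerivAt (fun s : ℝ => s • Δ) Δ t).const_add c
    apply HasDerivAt.hasDerivWithinAt
    apply hasDerivAt_pi.2
    rintro ⟨i', j', k'⟩
    have hFd : DifferentiableAt ℝ (FP f i' j' k') (γ t) :=
      ((FP_contDiffOn hΩo hf i' j' k' (γ t) hxΩ).contDiffAt
        (hΩo.mem_nhds hxΩ)).differentiableAt (by simp)
    have hcomp : HasDerivAt (fun s => FP f i' j' k' (γ s))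
        (fderiv ℝ (FP f i' j' k') (γ t) Δ) t :=
      hFd.hasFDerivAt.comp_hasDerivAt t hγd
    refine hcomp.congr_deriv ?_
    rw [fderiv_eq_sum_pd]
    apply Finset.sum_congr rfl
    intro l _
    have hcov : FPcov f i' j' k' l (γ t) = 0 := hpar i' j' k' l (γ t) hxΩ
    simp only [FPcov] at hcov
    rw [sub_eq_zero] at hcov
    rw [hcov]
  have hF0 : ‖F 0‖ ≤ 0 := by
    have : F 0 = 0 := by
      funext q
      show FP f q.1 q.2.1 q.2.2 (γ 0) = 0
      rw [hγ0]; exact hc0 _ _ _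
    rw [this, norm_zero]
  have hbound : ∀ t ∈ Ico (0:ℝ) 1, ‖F' t‖ ≤ K * ‖F t‖ + 0 := by
    intro t ht
    rw [add_zero]
    have hKF : 0 ≤ K * ‖F t‖ := mul_nonneg hKnn (norm_nonneg _)
    rw [pi_norm_le_iff_of_nonneg hKF]
    intro q
    rw [Real.norm_eq_abs]
    have hx : γ t ∈ Metric.closedBall c r := hγmem t (Ico_subset_Icc_self ht)
    have hterm : ∀ l : Fin n,
        |∑ m, (Gamma f m l q.1 (γ t) * FP f m q.2.1 q.2.2 (γ t) +
          Gamma f m l q.2.1 (γ t) * FP f q.1 m q.2.2 (γ t) +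
          Gamma f m l q.2.2 (γ t) * FP f q.1 q.2.1 m (γ t))|
        ≤ (n : ℝ) * (3 * (C * ‖F t‖)) := by
      intro l
      refine (Finset.abs_sum_le_sum_abs _ _).trans ?_
      have hm : ∀ m : Fin n,
          |Gamma f m l q.1 (γ t) * FP f m q.2.1 q.2.2 (γ t) +
           Gamma f m l q.2.1 (γ t) * FP f q.1 m q.2.2 (γ t) +
           Gamma f m l q.2.2 (γ t) * FP f q.1 q.2.1 m (γ t)| ≤ 3 * (C * ‖F t‖) := by
        intro m
        have hb : ∀ (a b a' b' : Fin n), |Gamma f m l a (γ t) * FP f a' b b' (γ t)| ≤ C * ‖F t‖ := by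
          intro a b a' b'
          rw [abs_mul]
          exact mul_le_mul (hΓ m l a _ hx) (hFPle t a' b b') (abs_nonneg _)
            hCnn
        have htri := abs_add_three (Gamma f m l q.1 (γ t) * FP f m q.2.1 q.2.2 (γ t))
          (Gamma f m l q.2.1 (γ t) * FP f q.1 m q.2.2 (γ t))
          (Gamma f m l q.2.2 (γ t) * FP f q.1 q.2.1 m (γ t))
        have e1 := hb q.1 q.2.1 m q.2.2
        have e2 := hb q.2.1 m q.1 q.2.2
        have e3 := hb q.2.2 q.2.1 q.1 m
        linarith
      refine (Finset.sum_le_sum fun m _ => hm m).trans (le_of_eq ?_)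
      rw [Finset.sum_const, Finset.card_univ, Fintype.card_fin, nsmul_eq_mul]
    have hF'q : F' t q = ∑ l, Δ l * (∑ m,
          (Gamma f m l q.1 (γ t) * FP f m q.2.1 q.2.2 (γ t) +
           Gamma f m l q.2.1 (γ t) * FP f q.1 m q.2.2 (γ t) +
           Gamma f m l q.2.2 (γ t) * FP f q.1 q.2.1 m (γ t))) := rfl
    rw [hF'q]
    calc |∑ l, Δ l * (∑ m,
          (Gamma f m l q.1 (γ t) * FP f m q.2.1 q.2.2 (γ t) +
           Gamma f m l q.2.1 (γ t) * FP f q.1 m q.2.2 (γ t) +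
           Gamma f m l q.2.2 (γ t) * FP f q.1 q.2.1 m (γ t)))| ≤ ∑ l, |Δ l * (∑ m,
          (Gamma f m l q.1 (γ t) * FP f m q.2.1 q.2.2 (γ t) +
           Gamma f m l q.2.1 (γ t) * FP f q.1 m q.2.2 (γ t) +
           Gamma f m l q.2.2 (γ t) * FP f q.1 q.2.1 m (γ t)))| :=
        Finset.abs_sum_le_sum_abs _ _
      _ ≤ ∑ l, |Δ l| * ((n : ℝ) * (3 * (C * ‖F t‖))) := by
          apply Finset.sum_le_sum
          intro l _
          rw [abs_mul]
          exact mul_le_mul_of_nonneg_left (hterm l) (abs_nonneg _)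
      _ = K * ‖F t‖ := by rw [← Finset.sum_mul, hK]; ring
  have hgr := norm_le_gronwallBound_of_norm_deriv_right_le hFcont hderiv hF0 hbound
  have h1 : ‖F 1‖ ≤ 0 := by
    have := hgr 1 (Set.mem_Icc.2 ⟨by norm_num, le_rfl⟩)
    rwa [gronwallBound_ε0_δ0] at this
  have hF1 : F 1 = 0 := by rwa [norm_le_zero_iff] at h1
  have h2 : FP f i j k (γ 1) = 0 := by simpa using congrFun hF1 (i, j, k)
  rwa [hγ1] at h2

lemma pd_sub {n : ℕ} {g1 g2 : (Fin n → ℝ) → ℝ} {x : Fin n → ℝ}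
    (h1 : DifferentiableAt ℝ g1 x) (h2 : DifferentiableAt ℝ g2 x) (i : Fin n) :
    pd i (fun y => g1 y - g2 y) x = pd i g1 x - pd i g2 x := by
  unfold pd; rw [fderiv_fun_sub h1 h2]; simp

lemma pd_clm {n : ℕ} (L : (Fin n → ℝ) →L[ℝ] ℝ) (i : Fin n) (x : Fin n → ℝ) :
    pd i (fun y => L y) x = L (Pi.single i 1) := by
  unfold pd
  rw [L.fderiv]

lemma quad_hasFDerivAt {n : ℕ} (B : Matrix (Fin n) (Fin n) ℝ) (x : Fin n → ℝ) :
    HasFDerivAt (fun y : Fin n → ℝ => (1/2 : ℝ) * ∑ i, ∑ j, B i j * y i * y j)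
      ((1/2 : ℝ) • ∑ i : Fin n, ∑ j : Fin n, B i j •
        (x i • (ContinuousLinearMap.proj j : (Fin n → ℝ) →L[ℝ] ℝ) +
         x j • (ContinuousLinearMap.proj i : (Fin n → ℝ) →L[ℝ] ℝ))) x := by
  have hij : ∀ i j : Fin n, HasFDerivAt (fun y : Fin n → ℝ => B i j * y i * y j)
      (B i j • (x i • (ContinuousLinearMap.proj j : (Fin n → ℝ) →L[ℝ] ℝ) +
        x j • (ContinuousLinearMap.proj i : (Fin n → ℝ) →L[ℝ] ℝ))) x := by
    intro i j
    have h1 : HasFDerivAt (fun y : Fin n → ℝ => y i)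
        (ContinuousLinearMap.proj i : (Fin n → ℝ) →L[ℝ] ℝ) x :=
      (ContinuousLinearMap.proj i : (Fin n → ℝ) →L[ℝ] ℝ).hasFDerivAt
    have h2 : HasFDerivAt (fun y : Fin n → ℝ => y j)
        (ContinuousLinearMap.proj j : (Fin n → ℝ) →L[ℝ] ℝ) x :=
      (ContinuousLinearMap.proj j : (Fin n → ℝ) →L[ℝ] ℝ).hasFDerivAt
    have := (h1.mul h2).const_mul (B i j)
    simpa [mul_assoc] using this
  have hsum : HasFDerivAt (fun y : Fin n → ℝ => ∑ i, ∑ j, B i j * y i * y j)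
      (∑ i : Fin n, ∑ j : Fin n, B i j •
        (x i • (ContinuousLinearMap.proj j : (Fin n → ℝ) →L[ℝ] ℝ) +
         x j • (ContinuousLinearMap.proj i : (Fin n → ℝ) →L[ℝ] ℝ))) x :=
    HasFDerivAt.fun_sum fun i _ => HasFDerivAt.fun_sum fun j _ => hij i j
  simpa using hsum.const_mul (1/2 : ℝ)

lemma pd_quad {n : ℕ} (B : Matrix (Fin n) (Fin n) ℝ) (hBsym : ∀ i j, B i j = B j i)
    (k : Fin n) (x : Fin n → ℝ) :
    pd k (fun y => (1/2 : ℝ) * ∑ i, ∑ j, B i j * y i * y j) x = ∑ j, B k j * x j := by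
  show fderiv ℝ _ x (Pi.single k 1) = _
  rw [(quad_hasFDerivAt B x).fderiv]
  simp only [ContinuousLinearMap.coe_smul', Pi.smul_apply, ContinuousLinearMap.coe_sum',
    Finset.sum_apply, ContinuousLinearMap.add_apply, ContinuousLinearMap.smul_apply,
    ContinuousLinearMap.proj_apply, Pi.single_apply, smul_eq_mul, mul_ite, ite_mul,
    mul_one, mul_zero, zero_mul, Finset.sum_add_distrib, Finset.sum_ite_eq,
    Finset.sum_ite_eq', Finset.mem_univ, if_true]
  have hs : ∑ i, B i k * x i = ∑ j, B k j * x j :=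
    Finset.sum_congr rfl fun i _ => by rw [hBsym i k]
  have hinner : ∀ i : Fin n,
      (∑ j, B i j * ((if j = k then x i else 0) + if i = k then x j else 0))
      = B i k * x i + (if i = k then ∑ j, B k j * x j else 0) := by
    intro i
    by_cases hik : i = k
    · subst hik
      simp [mul_add, Finset.sum_add_distrib, mul_ite, Finset.sum_ite_eq', Finset.mem_univ]
    · simp [hik, mul_ite, Finset.sum_ite_eq', Finset.mem_univ]
  rw [Finset.sum_congr rfl fun i _ => hinner i, Finset.sum_add_distrib,
    Finset.sum_ite_eq' Finset.univ k (fun _ => ∑ j, B k j * x j)]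
  simp only [Finset.mem_univ, if_true]
  rw [hs]
  ring

end Auxiliary

/-- Case 𝔠₀. If the Fubini–Pick form is parallel and at some point the
maximum of `A_p(v,v,v)` over the `G_p`-unit sphere equals `0`, then the Fubini–Pick form
vanishes identically, all third partials of `f` vanish, `f` is a strictly convex quadratic
polynomial, and the graph of `f` is Calabi affine equivalent to an open part of an
elliptic paraboloid. -/
theorem stmt6 {n : ℕ} (Ω : Set (Fin n → ℝ)) (hΩo : IsOpen Ω) (hΩc : IsConnected Ω)
    (f : (Fin n → ℝ) → ℝ) (hf : ContDiffOn ℝ (⊤ : ℕ∞) f Ω)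
    (hconv : ∀ x ∈ Ω, (hessMat f x).PosDef)
    (hpar : ParallelFP f Ω)
    (p : Fin n → ℝ) (hp : p ∈ Ω)
    (hmax0 : IsGreatest ((fun v => Ap f p v v v) '' {v | Gp f p v v = 1}) 0) :
    (∀ x ∈ Ω, ∀ i j k : Fin n, FP f i j k x = 0) ∧
    (∀ x ∈ Ω, ∀ i j k : Fin n, f3 f i j k x = 0) ∧
    (∃ B : Matrix (Fin n) (Fin n) ℝ, B.PosDef ∧ ∃ a : Fin n → ℝ, ∃ b : ℝ,
      ∀ x ∈ Ω, f x = (1 / 2) * (∑ i, ∑ j, B i j * x i * x j) + (∑ i, a i * x i) + b) ∧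
    CalabiEquivOpenPart f Ω (paraboloid n) Set.univ := by
  classical
  have hΩpc : IsPreconnected Ω := hΩc.isPreconnected
  have hFPp : ∀ i j k : Fin n, FP f i j k p = 0 := fun i j k =>
    FP_p_zero hΩo hf hp (hconv p hp) hmax0 i j k
  have hFPz : ∀ x ∈ Ω, ∀ i j k : Fin n, FP f i j k x = 0 := by
    have hsub : Ω ⊆ {x | ∀ i j k : Fin n, FP f i j k x = 0} := by
      refine clopen_globalize hΩpc _ ?_ ?_ hFPp hp
      · rintro z ⟨hzS, hzΩ⟩
        obtain ⟨ε, hε, hball⟩ := Metric.isOpen_iff.1 hΩo z hzΩ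
        have hcb : Metric.closedBall z (ε/2) ⊆ Ω :=
          (Metric.closedBall_subset_ball (by linarith)).trans hball
        refine ⟨ε/2, by linarith, fun w hw =>
          ⟨hcb (Metric.ball_subset_closedBall hw), fun i j k => ?_⟩⟩
        exact FP_zero_ball hΩo hf hconv hpar hcb hzS
          (Metric.ball_subset_closedBall hw) i j k
      · intro z hzΩ hzc i j k
        have hc : ContinuousWithinAt (FP f i j k)
            {x | ∀ i j k : Fin n, FP f i j k x = 0} z :=
          ((((FP_contDiffOn hΩo hf i j k) z hzΩ).contDiffAt
            (hΩo.mem_nhds hzΩ)).differentiableAt (by simp)).continuousAt.continuousWithinAt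
        have h1 := hc.mem_closure_image hzc
        have himg : FP f i j k '' {x | ∀ i j k : Fin n, FP f i j k x = 0} ⊆ {0} := by
          rintro _ ⟨w, hw, rfl⟩; exact hw i j k
        have h2 : FP f i j k z ∈ closure ({0} : Set ℝ) := closure_mono himg h1
        rwa [closure_singleton, mem_singleton_iff] at h2
    exact fun x hx => hsub hx
  have hf3z : ∀ x ∈ Ω, ∀ i j k : Fin n, f3 f i j k x = 0 := by
    intro x hx i j k
    have h := hFPz x hx i j k
    have he : FP f i j k x = -(1/2) * f3 f i j k x := rfl
    rw [he] at h
    linarith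
  have hBpd : (hessMat f p).PosDef := hconv p hp
  have hBsym : ∀ i j, hessMat f p i j = hessMat f p j i := by
    intro i j
    show pd i (pd j f) p = pd j (pd i f) p
    exact pd_pd_symm hΩo hf hp i j
  have hBconst : ∀ x ∈ Ω, ∀ i j, pd i (pd j f) x = hessMat f p i j := by
    intro x hx i j
    have hd : ∀ z ∈ Ω, DifferentiableAt ℝ (pd i (pd j f)) z := fun z hz =>
      (((pd_contDiffOn hΩo (pd_contDiffOn hΩo hf j) i) z hz).contDiffAt
        (hΩo.mem_nhds hz)).differentiableAt (by simp)
    have h0 : ∀ z ∈ Ω, ∀ k, pd k (pd i (pd j f)) z = 0 := fun z hz k => hf3z z hz k i j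
    exact const_of_pd_zero hΩo hΩpc hd h0 hp hx
  set B : Matrix (Fin n) (Fin n) ℝ := hessMat f p with hBdef
  set q : (Fin n → ℝ) → ℝ := fun y => (1/2 : ℝ) * ∑ i, ∑ j, B i j * y i * y j with hqdef
  have hpdq : ∀ k x, pd k q x = ∑ j, B k j * x j := fun k x => pd_quad B hBsym k x
  set Lq : Fin n → (Fin n → ℝ) →L[ℝ] ℝ := fun i => ∑ j, B i j •
    (ContinuousLinearMap.proj j : (Fin n → ℝ) →L[ℝ] ℝ) with hLqdef
  have hLq_eval : ∀ i (y : Fin n → ℝ), Lq i y = ∑ j, B i j * y j := by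
    intro i y
    simp [hLqdef, ContinuousLinearMap.sum_apply, ContinuousLinearMap.smul_apply,
      ContinuousLinearMap.proj_apply, smul_eq_mul]
  have hLq_single : ∀ i k, Lq i (Pi.single k 1) = B i k := by
    intro i k
    rw [hLq_eval]
    simp [Pi.single_apply, mul_ite, Finset.sum_ite_eq', Finset.mem_univ]
  have hpdq_fun : ∀ i, pd i q = fun y => Lq i y := by
    intro i; funext y; rw [hpdq i y, hLq_eval]
  set a : Fin n → ℝ := fun i => pd i f p - pd i q p with hadef
  have hstepA : ∀ i, ∀ x ∈ Ω, pd i f x - pd i q x = a i := by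
    intro i x hx
    have hd : ∀ z ∈ Ω, DifferentiableAt ℝ (fun y => pd i f y - pd i q y) z := by
      intro z hz
      have h1 : DifferentiableAt ℝ (pd i f) z :=
        (((pd_contDiffOn hΩo hf i) z hz).contDiffAt (hΩo.mem_nhds hz)).differentiableAt (by simp)
      have h2 : DifferentiableAt ℝ (pd i q) z := by
        rw [hpdq_fun i]; exact (Lq i).differentiableAt
      exact h1.sub h2
    have h0 : ∀ z ∈ Ω, ∀ k, pd k (fun y => pd i f y - pd i q y) z = 0 := by
      intro z hz k
      have h1 : DifferentiableAt ℝ (pd i f) z :=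
        (((pd_contDiffOn hΩo hf i) z hz).contDiffAt (hΩo.mem_nhds hz)).differentiableAt (by simp)
      have h2 : DifferentiableAt ℝ (pd i q) z := by
        rw [hpdq_fun i]; exact (Lq i).differentiableAt
      rw [pd_sub h1 h2 k]
      have e1 : pd k (pd i f) z = B k i := hBconst z hz k i
      have e2 : pd k (pd i q) z = B i k := by
        rw [hpdq_fun i, pd_clm (Lq i) k z, hLq_single i k]
      rw [e1, e2, hBsym k i, sub_self]
    exact const_of_pd_zero hΩo hΩpc hd h0 hp hx
  set La : (Fin n → ℝ) →L[ℝ] ℝ := ∑ j, a j •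
    (ContinuousLinearMap.proj j : (Fin n → ℝ) →L[ℝ] ℝ) with hLadef
  have hLa_eval : ∀ y : Fin n → ℝ, La y = ∑ j, a j * y j := by
    intro y
    simp [hLadef, ContinuousLinearMap.sum_apply, ContinuousLinearMap.smul_apply,
      ContinuousLinearMap.proj_apply, smul_eq_mul]
  have hLa_single : ∀ k, La (Pi.single k 1) = a k := by
    intro k
    rw [hLa_eval]
    simp [Pi.single_apply, mul_ite, Finset.sum_ite_eq', Finset.mem_univ]
  have hqd : ∀ x, DifferentiableAt ℝ q x := fun x =>
    (quad_hasFDerivAt B x).differentiableAt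
  set b : ℝ := f p - q p - La p with hbdef
  have hstepB : ∀ x ∈ Ω, f x - q x - La x = b := by
    intro x hx
    have hd : ∀ z ∈ Ω, DifferentiableAt ℝ (fun y => f y - q y - La y) z := by
      intro z hz
      have h1 : DifferentiableAt ℝ f z :=
        ((hf z hz).contDiffAt (hΩo.mem_nhds hz)).differentiableAt (by simp)
      exact (h1.sub (hqd z)).sub La.differentiableAt
    have h0 : ∀ z ∈ Ω, ∀ i, pd i (fun y => f y - q y - La y) z = 0 := by
      intro z hz i
      have h1 : DifferentiableAt ℝ f z :=
        ((hf z hz).contDiffAt (hΩo.mem_nhds hz)).differentiableAt (by simp)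
      have h2 := hqd z
      have h3 : DifferentiableAt ℝ (fun y => La y) z := La.differentiableAt
      have e0 : pd i (fun y => f y - q y - La y) z
          = pd i (fun y => f y - q y) z - pd i (fun y => La y) z :=
        pd_sub (h1.sub h2) h3 i
      rw [e0, pd_sub h1 h2 i, pd_clm La i z, hLa_single i]
      have hA := hstepA i z hz
      linarith
    exact const_of_pd_zero hΩo hΩpc hd h0 hp hx
  have hquad : ∀ x ∈ Ω,
      f x = (1/2 : ℝ) * (∑ i, ∑ j, B i j * x i * x j) + (∑ i, a i * x i) + b := by
    intro x hx
    have h := hstepB x hx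
    have hLx := hLa_eval x
    have hqx : q x = (1/2 : ℝ) * (∑ i, ∑ j, B i j * x i * x j) := rfl
    rw [hLx] at h
    linarith [h, hqx]
  refine ⟨hFPz, hf3z, ⟨B, hBpd, a, b, hquad⟩, ?_⟩
  -- Calabi affine equivalence with the elliptic paraboloid
  have hPSD := hBpd.posSemidef
  obtain ⟨S, hSsa, hS2'⟩ : ∃ S : Matrix (Fin n) (Fin n) ℝ, IsSelfAdjoint S ∧ B = S * S := by
    open scoped MatrixOrder in
    exact CStarAlgebra.nonneg_iff_exists_isSelfAdjoint_and_eq_mul_self.mp hPSD.nonneg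
  have hS2 : S * S = B := hS2'.symm
  have hSh : S.IsHermitian := hSsa
  have hSdet : S.det ≠ 0 := by
    intro h
    have hB0 : B.det = 0 := by rw [← hS2, Matrix.det_mul, h, mul_zero]
    exact (ne_of_gt hBpd.det_pos) hB0
  have hSinv : Invertible S := S.invertibleOfIsUnitDet (isUnit_iff_ne_zero.2 hSdet)
  set φL : (Fin n → ℝ) ≃ₗ[ℝ] (Fin n → ℝ) := S.toLinearEquiv' hSinv with hφL
  refine ⟨φL.toAffineEquiv, fun i => -(a i), -b, subset_univ _, ?_⟩
  intro x hx
  have hφx : φL.toAffineEquiv x = S.mulVec x := by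
    show Matrix.toLin' S x = S.mulVec x
    rw [Matrix.toLin'_apply]
  have hsymS : ∀ i j, S j i = S i j := by
    intro i j
    have := congrFun (congrFun hSh i) j
    simpa [Matrix.conjTranspose_apply] using this
  have key : ∑ jj, (S.mulVec x jj)^2 = ∑ i, ∑ j, B i j * x i * x j := by
    have h1 : ∀ jj, (S.mulVec x jj)^2 = ∑ i, ∑ l, (S jj i * x i) * (S jj l * x l) := by
      intro jj
      rw [Matrix.mulVec, dotProduct, sq, Finset.sum_mul_sum]
    rw [Finset.sum_congr rfl fun jj _ => h1 jj, Finset.sum_comm]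
    refine Finset.sum_congr rfl fun i _ => ?_
    rw [Finset.sum_comm]
    refine Finset.sum_congr rfl fun l _ => ?_
    have h2 : ∑ jj, (S jj i * x i) * (S jj l * x l)
        = (∑ jj, S i jj * S jj l) * (x i * x l) := by
      rw [Finset.sum_mul]
      refine Finset.sum_congr rfl fun jj _ => ?_
      rw [hsymS i jj]
      ring
    rw [h2, ← Matrix.mul_apply, hS2]
    ring
  rw [hφx]
  show (1/2 : ℝ) * ∑ jj, (S.mulVec x jj)^2 = f x + (∑ j, -(a j) * x j) + -b
  rw [key]
  have hneg : (∑ j, -(a j) * x j) = -(∑ j, a j * x j) := by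
    rw [← Finset.sum_neg_distrib]
    exact Finset.sum_congr rfl fun j _ => by ring
  rw [hneg]
  have hfx := hquad x hx
  rw [hfx]
  ring

end
end

section
/- Let n ≥ 2 and let f be a smooth strictly convex function on an open domain Ω ⊆ ℝⁿ whose Fubini–Pick form is parallel (∇A = 0). Then Case 𝔠_n does not occur: there is no point p ∈ Ω together with a G_p-orthonormal basis {e₁, …, e_n} of ℝⁿ and numbers μ₁, …, μ_n such that e₁ maximizes A_p(v,v,v) over the G_p-unit sphere with maximum value μ₁, A_p(e₁, e_j, e_k) = μ_j δ_{jk} for all j, k, and μ_j = (1/2)μ₁ > 0 for all j = 2, …, n. -/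
open scoped BigOperators
open Real Set

noncomputable section

variable {n : ℕ} {Ω : Set (Fin n → ℝ)}

/-- smooth (C^∞) on Ω -/
def SmOn (Ω : Set (Fin n → ℝ)) (g : (Fin n → ℝ) → ℝ) : Prop :=
  ContDiffOn ℝ (⊤ : ℕ∞) g Ω

lemma SmOn.diffAt (hΩ : IsOpen Ω) {g : (Fin n → ℝ) → ℝ} (hg : SmOn Ω g)
    {p : Fin n → ℝ} (hp : p ∈ Ω) : DifferentiableAt ℝ g p :=
  (hg.contDiffAt (hΩ.mem_nhds hp)).differentiableAt (by simp)

lemma SmOn.pd (hΩ : IsOpen Ω) {g : (Fin n → ℝ) → ℝ} (hg : SmOn Ω g) (i : Fin n) :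
    SmOn Ω (pd i g) := by
  have h := hg.fderiv_of_isOpen hΩ (m := (⊤ : ℕ∞)) (by
    simp)
  exact h.clm_apply contDiffOn_const

lemma SmOn.mul (hΩ : IsOpen Ω) {g h : (Fin n → ℝ) → ℝ} (hg : SmOn Ω g) (hh : SmOn Ω h) :
    SmOn Ω (fun x => g x * h x) := ContDiffOn.mul hg hh

lemma SmOn.sum {ι : Type*} {s : Finset ι} {g : ι → (Fin n → ℝ) → ℝ}
    (hg : ∀ i ∈ s, SmOn Ω (g i)) : SmOn Ω (fun x => ∑ i ∈ s, g i x) :=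
  ContDiffOn.sum hg

lemma SmOn.const (c : ℝ) : SmOn Ω (fun _ => c) := contDiffOn_const

lemma pd_congr (hΩ : IsOpen Ω) {g h : (Fin n → ℝ) → ℝ} (hgh : ∀ x ∈ Ω, g x = h x)
    {p : Fin n → ℝ} (hp : p ∈ Ω) (i : Fin n) : pd i g p = pd i h p := by
  have : g =ᶠ[nhds p] h := Filter.eventuallyEq_of_mem (hΩ.mem_nhds hp) hgh
  simp only [pd, this.fderiv_eq]

lemma pd_mul {g h : (Fin n → ℝ) → ℝ} {p : Fin n → ℝ}
    (hg : DifferentiableAt ℝ g p) (hh : DifferentiableAt ℝ h p) (i : Fin n) :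
    pd i (fun x => g x * h x) p = pd i g p * h p + g p * pd i h p := by
  simp only [pd, fderiv_fun_mul hg hh]
  simp [mul_comm]
  ring

lemma pd_sum {ι : Type*} {s : Finset ι} {g : ι → (Fin n → ℝ) → ℝ} {p : Fin n → ℝ}
    (hg : ∀ j ∈ s, DifferentiableAt ℝ (g j) p) (i : Fin n) :
    pd i (fun x => ∑ j ∈ s, g j x) p = ∑ j ∈ s, pd i (g j) p := by
  simp only [pd, fderiv_fun_sum hg]
  simp

lemma pd_const (c : ℝ) (p : Fin n → ℝ) (i : Fin n) : pd i (fun _ => c) p = 0 := by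
  simp [pd]

lemma pd_mul_const {g : (Fin n → ℝ) → ℝ} {p : Fin n → ℝ}
    (hg : DifferentiableAt ℝ g p) (c : ℝ) (i : Fin n) :
    pd i (fun x => g x * c) p = pd i g p * c := by
  simp only [pd, fderiv_mul_const hg]
  simp [mul_comm]

lemma pd_const_mul {g : (Fin n → ℝ) → ℝ} {p : Fin n → ℝ}
    (hg : DifferentiableAt ℝ g p) (c : ℝ) (i : Fin n) :
    pd i (fun x => c * g x) p = c * pd i g p := by
  simp only [pd, fderiv_const_mul hg]
  simp

/-- Schwarz symmetry of second partials. -/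
lemma pd_comm (hΩ : IsOpen Ω) {g : (Fin n → ℝ) → ℝ} (hg : SmOn Ω g)
    {p : Fin n → ℝ} (hp : p ∈ Ω) (i j : Fin n) :
    pd i (pd j g) p = pd j (pd i g) p := by
  have hφ : ContDiffAt ℝ (⊤ : ℕ∞) (fderiv ℝ g) p := by
    have := (hg.contDiffAt (hΩ.mem_nhds hp)).fderiv_right (m := (⊤ : ℕ∞)) (by simp)
    exact this
  have hφd : DifferentiableAt ℝ (fderiv ℝ g) p :=
    hφ.differentiableAt (by simp)
  have hev : ∀ᶠ y in nhds p, HasFDerivAt g (fderiv ℝ g y) y := by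
    filter_upwards [hΩ.mem_nhds hp] with y hy
    exact (hg.diffAt hΩ hy).hasFDerivAt
  have hsym := second_derivative_symmetric_of_eventually hev hφd.hasFDerivAt
      (Pi.single i 1) (Pi.single j 1)
  have key : ∀ u v : Fin n → ℝ,
      fderiv ℝ (fun y => fderiv ℝ g y v) p u = fderiv ℝ (fderiv ℝ g) p u v := by
    intro u v
    have h1 : HasFDerivAt (fun y => fderiv ℝ g y v)
        ((ContinuousLinearMap.apply ℝ ℝ v).comp (fderiv ℝ (fderiv ℝ g) p)) p :=
      (ContinuousLinearMap.apply ℝ ℝ v).hasFDerivAt.comp p hφd.hasFDerivAt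
    rw [h1.fderiv]
    rfl
  show fderiv ℝ (fun y => fderiv ℝ g y (Pi.single j 1)) p (Pi.single i 1) = _
  rw [key, hsym, ← key]
  rfl

-- product over a Finset
lemma SmOn.prod (hΩ : IsOpen Ω) {ι : Type*} {s : Finset ι} {g : ι → (Fin n → ℝ) → ℝ}
    (hg : ∀ i ∈ s, SmOn Ω (g i)) : SmOn Ω (fun x => ∏ i ∈ s, g i x) := by
  classical
  induction s using Finset.induction with
  | empty => simpa using SmOn.const 1
  | insert a s hns ih =>
    simp only [Finset.prod_insert hns]
    exact SmOn.mul hΩ (hg a (Finset.mem_insert_self a s))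
      (ih fun i hi => hg i (Finset.mem_insert_of_mem hi))

lemma smOn_det (hΩ : IsOpen Ω) {M : (Fin n → ℝ) → Matrix (Fin n) (Fin n) ℝ}
    (h : ∀ i j, SmOn Ω fun x => M x i j) : SmOn Ω fun x => (M x).det := by
  have : (fun x => (M x).det)
      = fun x => ∑ σ : Equiv.Perm (Fin n), (Equiv.Perm.sign σ : ℤ) *
          ∏ i, M x (σ i) i := by
    funext x; rw [Matrix.det_apply']
  rw [this]
  exact SmOn.sum fun σ _ => SmOn.mul hΩ (SmOn.const _) (SmOn.prod hΩ fun i _ => h _ _)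

variable (f : (Fin n → ℝ) → ℝ)

lemma hessMat_apply (x : Fin n → ℝ) (i j : Fin n) : hessMat f x i j = pd i (pd j f) x := rfl

variable {f}

section smooth
variable (hΩ : IsOpen Ω) (hf : SmOn Ω f)
include hΩ hf

lemma sm_hess (i j : Fin n) : SmOn Ω fun x => hessMat f x i j :=
  (hf.pd hΩ j).pd hΩ i

lemma sm_f3 (i j k : Fin n) : SmOn Ω (f3 f i j k) :=
  ((hf.pd hΩ k).pd hΩ j).pd hΩ i

variable (hconv : ∀ x ∈ Ω, (hessMat f x).PosDef)
include hconv

lemma det_ne (x : Fin n → ℝ) (hx : x ∈ Ω) : (hessMat f x).det ≠ 0 :=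
  ((hconv x hx).det_pos).ne'

lemma sm_hessInv (a b : Fin n) : SmOn Ω fun x => hessInv f x a b := by
  have hdet : SmOn Ω fun x => (hessMat f x).det := smOn_det hΩ (sm_hess hΩ hf)
  have hinv : SmOn Ω fun x => ((hessMat f x).det)⁻¹ :=
    hdet.inv (fun x hx => det_ne hΩ hf hconv x hx)
  have hadj : SmOn Ω fun x => (hessMat f x).adjugate a b := by
    have : (fun x => (hessMat f x).adjugate a b)
        = fun x => ((hessMat f x).updateRow b (Pi.single a 1)).det := by
      funext x; rw [Matrix.adjugate_apply]
    rw [this]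
    refine smOn_det hΩ fun i j => ?_
    by_cases hib : i = b
    · have : (fun x => ((hessMat f x).updateRow b (Pi.single a 1)) i j)
          = fun _ => if j = a then (1:ℝ) else 0 := by
        funext x; simp [Matrix.updateRow_apply, hib, Pi.single_apply]
      rw [this]; exact SmOn.const _
    · have : (fun x => ((hessMat f x).updateRow b (Pi.single a 1)) i j)
          = fun x => hessMat f x i j := by
        funext x; simp [Matrix.updateRow_apply, hib]
      rw [this]; exact sm_hess hΩ hf i j
  have : (fun x => hessInv f x a b)
      = fun x => ((hessMat f x).det)⁻¹ * (hessMat f x).adjugate a b := by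
    funext x
    show ((hessMat f x)⁻¹) a b = _
    rw [Matrix.inv_def]
    simp [Ring.inverse_eq_inv]
  rw [this]
  exact hinv.mul hΩ hadj

lemma sm_Gamma (k i j : Fin n) : SmOn Ω (_root_.Gamma f k i j) := by
  unfold _root_.Gamma
  exact (SmOn.const _).mul hΩ (SmOn.sum fun l _ =>
    (sm_hessInv hΩ hf hconv k l).mul hΩ (sm_f3 hΩ hf i j l))

end smooth

section main
variable (hΩ : IsOpen Ω) {f : (Fin n → ℝ) → ℝ} (hf : SmOn Ω f)
  (hconv : ∀ x ∈ Ω, (hessMat f x).PosDef)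
include hΩ hf

lemma sm_FP (i j k : Fin n) : SmOn Ω (FP f i j k) :=
  (SmOn.const _).mul hΩ (sm_f3 hΩ hf i j k)

/-- symmetry of f3 in first two indices, pointwise on Ω -/
lemma f3_swap12 {x : Fin n → ℝ} (hx : x ∈ Ω) (i j k : Fin n) :
    f3 f i j k x = f3 f j i k x :=
  pd_comm hΩ (hf.pd hΩ k) hx i j

/-- symmetry of f3 in last two indices, pointwise on Ω -/
lemma f3_swap23 {x : Fin n → ℝ} (hx : x ∈ Ω) (i j k : Fin n) :
    f3 f i j k x = f3 f i k j x := by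
  exact pd_congr hΩ (fun y hy => pd_comm hΩ hf hy j k) hx i

lemma f3_rot {x : Fin n → ℝ} (hx : x ∈ Ω) (i j k : Fin n) :
    f3 f i j k x = f3 f j k i x := by
  rw [f3_swap12 hΩ hf hx, f3_swap23 hΩ hf hx]

lemma FP_swap12 {x : Fin n → ℝ} (hx : x ∈ Ω) (i j k : Fin n) :
    FP f i j k x = FP f j i k x := by unfold FP; rw [f3_swap12 hΩ hf hx]
lemma FP_swap23 {x : Fin n → ℝ} (hx : x ∈ Ω) (i j k : Fin n) :
    FP f i j k x = FP f i k j x := by unfold FP; rw [f3_swap23 hΩ hf hx]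
lemma FP_rot {x : Fin n → ℝ} (hx : x ∈ Ω) (i j k : Fin n) :
    FP f i j k x = FP f j k i x := by unfold FP; rw [f3_rot hΩ hf hx]

lemma Gamma_swap {x : Fin n → ℝ} (hx : x ∈ Ω) (a l i : Fin n) :
    _root_.Gamma f a l i x = _root_.Gamma f a i l x := by
  unfold _root_.Gamma
  congr 1
  exact Finset.sum_congr rfl fun b _ => by rw [f3_swap12 hΩ hf hx]

lemma Gamma_eq_FP {x : Fin n → ℝ} (hx : x ∈ Ω) (a l i : Fin n) :
    _root_.Gamma f a l i x = -∑ b, hessInv f x a b * FP f l i b x := by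
  unfold _root_.Gamma FP
  rw [Finset.mul_sum, ← Finset.sum_neg_distrib]
  exact Finset.sum_congr rfl fun b _ => by ring

omit hf in
lemma pd_hess_entry (p : Fin n → ℝ) (m c b : Fin n) :
    pd m (fun x => hessMat f x c b) p = f3 f m c b p := rfl

include hconv

/-- inverse times Hessian is identity, entrywise -/
lemma FH {x : Fin n → ℝ} (hx : x ∈ Ω) (a b : Fin n) :
    ∑ c, hessInv f x a c * hessMat f x c b = if a = b then 1 else 0 := by
  have h1 : hessInv f x * hessMat f x = 1 :=
    Matrix.nonsing_inv_mul _ (Ne.isUnit (det_ne hΩ hf hconv x hx))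
  have := congrFun (congrFun h1 a) b
  rw [Matrix.mul_apply] at this
  rw [this, Matrix.one_apply]

lemma HF {x : Fin n → ℝ} (hx : x ∈ Ω) (a b : Fin n) :
    ∑ c, hessMat f x a c * hessInv f x c b = if a = b then 1 else 0 := by
  have h1 : hessMat f x * hessInv f x = 1 :=
    Matrix.mul_nonsing_inv _ (Ne.isUnit (det_ne hΩ hf hconv x hx))
  have := congrFun (congrFun h1 a) b
  rw [Matrix.mul_apply] at this
  rw [this, Matrix.one_apply]


/-- derivative of the inverse Hessian -/
lemma dF {p : Fin n → ℝ} (hp : p ∈ Ω) (a b m : Fin n) :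
    pd m (fun x => hessInv f x a b) p
      = -∑ c, ∑ d, hessInv f p a c * f3 f m c d p * hessInv f p d b := by
  have hdF : ∀ c, ∑ e, pd m (fun x => hessInv f x a e) p * hessMat f p e c
      = -∑ e, hessInv f p a e * f3 f m e c p := by
    intro c
    have h0 : pd m (fun x => ∑ e, hessInv f x a e * hessMat f x e c) p = 0 := by
      rw [pd_congr hΩ (fun y hy => FH hΩ hf hconv hy a c) hp m, pd_const]
    rw [pd_sum (fun e _ => ((sm_hessInv hΩ hf hconv a e).diffAt hΩ hp).fun_mul
      ((sm_hess hΩ hf e c).diffAt hΩ hp)) m] at h0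
    have h1 : ∀ e, pd m (fun x => hessInv f x a e * hessMat f x e c) p
        = pd m (fun x => hessInv f x a e) p * hessMat f p e c
          + hessInv f p a e * f3 f m e c p := by
      intro e
      rw [pd_mul ((sm_hessInv hΩ hf hconv a e).diffAt hΩ hp)
        ((sm_hess hΩ hf e c).diffAt hΩ hp), pd_hess_entry hΩ]
    rw [Finset.sum_congr rfl fun e _ => h1 e, Finset.sum_add_distrib] at h0
    linarith [h0]
  -- now multiply by hessInv on the right
  have key : pd m (fun x => hessInv f x a b) p
      = ∑ c, (∑ e, pd m (fun x => hessInv f x a e) p * hessMat f p e c)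
          * hessInv f p c b := by
    have : ∀ e : Fin n, pd m (fun x => hessInv f x a e) p * (if e = b then (1:ℝ) else 0)
        = pd m (fun x => hessInv f x a e) p * ∑ c, hessMat f p e c * hessInv f p c b := by
      intro e; rw [HF hΩ hf hconv hp e b]
    calc pd m (fun x => hessInv f x a b) p
        = ∑ e, pd m (fun x => hessInv f x a e) p * (if e = b then (1:ℝ) else 0) := by
          simp
      _ = ∑ e, ∑ c, pd m (fun x => hessInv f x a e) p
            * (hessMat f p e c * hessInv f p c b) := by
          rw [Finset.sum_congr rfl fun e _ => by rw [this e, Finset.mul_sum]]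
      _ = ∑ c, (∑ e, pd m (fun x => hessInv f x a e) p * hessMat f p e c)
            * hessInv f p c b := by
          rw [Finset.sum_comm]
          exact Finset.sum_congr rfl fun c _ => by
            rw [Finset.sum_mul]
            exact Finset.sum_congr rfl fun e _ => by ring
  rw [key, Finset.sum_congr rfl fun c _ => by rw [hdF c]]
  have h2 : ∀ c, (-∑ e, hessInv f p a e * f3 f m e c p) * hessInv f p c b
      = -∑ e, hessInv f p a e * f3 f m e c p * hessInv f p c b := by
    intro c; rw [neg_mul, Finset.sum_mul]
  rw [Finset.sum_congr rfl fun c _ => h2 c]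
  rw [show (∑ c, -∑ e, hessInv f p a e * f3 f m e c p * hessInv f p c b)
      = -∑ c, ∑ e, hessInv f p a e * f3 f m e c p * hessInv f p c b by
    rw [← Finset.sum_neg_distrib]]
  rw [neg_inj, Finset.sum_comm]

omit hΩ hf hconv in
lemma Gamma_val (p : Fin n → ℝ) (a l i : Fin n) :
    _root_.Gamma f a l i p = (1/2) * ∑ b, hessInv f p a b * f3 f l i b p := rfl

lemma dGamma_expand {p : Fin n → ℝ} (hp : p ∈ Ω) (a l i m : Fin n) :
    pd m (_root_.Gamma f a l i) p
      = (1/2) * ∑ b, (pd m (fun x => hessInv f x a b) p * f3 f l i b p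
          + hessInv f p a b * pd m (f3 f l i b) p) := by
  have hd : ∀ b : Fin n, DifferentiableAt ℝ (fun x => hessInv f x a b * f3 f l i b x) p :=
    fun b => ((sm_hessInv hΩ hf hconv a b).diffAt hΩ hp).mul
      ((sm_f3 hΩ hf l i b).diffAt hΩ hp)
  show pd m (fun x => (1/2) * ∑ b, hessInv f x a b * f3 f l i b x) p = _
  rw [pd_const_mul (SmOn.diffAt hΩ (SmOn.sum fun b _ =>
    (sm_hessInv hΩ hf hconv a b).mul hΩ (sm_f3 hΩ hf l i b)) hp) _ m]
  rw [pd_sum (fun b _ => hd b) m]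
  congr 1
  refine Finset.sum_congr rfl fun b _ => ?_
  rw [pd_mul ((sm_hessInv hΩ hf hconv a b).diffAt hΩ hp)
    ((sm_f3 hΩ hf l i b).diffAt hΩ hp)]

lemma dF_contract {p : Fin n → ℝ} (hp : p ∈ Ω) (a m l i : Fin n) :
    ∑ b, pd m (fun x => hessInv f x a b) p * f3 f l i b p
      = -4 * ∑ d, _root_.Gamma f a m d p * _root_.Gamma f d l i p := by
  have step1 : ∑ b, pd m (fun x => hessInv f x a b) p * f3 f l i b p
      = -∑ b, ∑ c, ∑ d, hessInv f p a c * f3 f m c d p * hessInv f p d b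
          * f3 f l i b p := by
    rw [Finset.sum_congr rfl fun b _ => by
      rw [dF hΩ hf hconv hp a b m, neg_mul, Finset.sum_mul,
        Finset.sum_congr rfl fun c _ => by rw [Finset.sum_mul]]]
    rw [Finset.sum_neg_distrib]
  rw [step1]
  have step2 : ∑ b, ∑ c, ∑ d, hessInv f p a c * f3 f m c d p * hessInv f p d b
        * f3 f l i b p
      = ∑ c, ∑ d, (hessInv f p a c * f3 f m c d p)
          * ∑ b, hessInv f p d b * f3 f l i b p := by
    rw [Finset.sum_comm]
    refine Finset.sum_congr rfl fun c _ => ?_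
    rw [Finset.sum_comm]
    refine Finset.sum_congr rfl fun d _ => ?_
    rw [Finset.mul_sum]
    exact Finset.sum_congr rfl fun b _ => by ring
  rw [step2]
  have hfold : ∀ d, ∑ b, hessInv f p d b * f3 f l i b p
      = 2 * _root_.Gamma f d l i p := by
    intro d; rw [Gamma_val]; ring
  have hfold2 : ∀ c d, f3 f m c d p = f3 f m d c p :=
    fun c d => f3_swap23 hΩ hf hp m c d
  have step3 : ∑ c, ∑ d, (hessInv f p a c * f3 f m c d p)
        * ∑ b, hessInv f p d b * f3 f l i b p
      = ∑ d, (∑ c, hessInv f p a c * f3 f m d c p)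
          * (2 * _root_.Gamma f d l i p) := by
    rw [Finset.sum_comm]
    refine Finset.sum_congr rfl fun d _ => ?_
    rw [Finset.sum_mul]
    exact Finset.sum_congr rfl fun c _ => by rw [hfold d, hfold2 c d]
  rw [step3]
  have hfold3 : ∀ d, ∑ c, hessInv f p a c * f3 f m d c p
      = 2 * _root_.Gamma f a m d p := by
    intro d; rw [Gamma_val]; ring
  rw [Finset.sum_congr rfl fun d _ => by rw [hfold3 d]]
  rw [← Finset.sum_neg_distrib, Finset.mul_sum]
  exact Finset.sum_congr rfl fun d _ => by ring

lemma dGamma_antisym {p : Fin n → ℝ} (hp : p ∈ Ω) (a l i m : Fin n) :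
    pd m (_root_.Gamma f a l i) p - pd l (_root_.Gamma f a m i) p
      = 2 * ∑ d, _root_.Gamma f a l d p * _root_.Gamma f d m i p
        - 2 * ∑ d, _root_.Gamma f a m d p * _root_.Gamma f d l i p := by
  have hsw : ∀ b : Fin n, pd m (f3 f l i b) p = pd l (f3 f m i b) p := by
    intro b
    exact pd_comm hΩ ((hf.pd hΩ b).pd hΩ i) hp m l
  have e1 := dGamma_expand hΩ hf hconv hp a l i m
  have e2 := dGamma_expand hΩ hf hconv hp a m i l
  rw [e1, e2]
  have s1 : ∀ (l' m' : Fin n), (1/2 : ℝ) * ∑ b, (pd m' (fun x => hessInv f x a b) p * f3 f l' i b p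
          + hessInv f p a b * pd m' (f3 f l' i b) p)
      = (1/2) * (∑ b, pd m' (fun x => hessInv f x a b) p * f3 f l' i b p)
        + (1/2) * ∑ b, hessInv f p a b * pd m' (f3 f l' i b) p := by
    intro l' m'; rw [Finset.sum_add_distrib]; ring
  rw [s1 l m, s1 m l, dF_contract hΩ hf hconv hp a m l i, dF_contract hΩ hf hconv hp a l m i]
  have hS : ∑ b, hessInv f p a b * pd m (f3 f l i b) p
      = ∑ b, hessInv f p a b * pd l (f3 f m i b) p :=
    Finset.sum_congr rfl fun b _ => by rw [hsw b]
  rw [hS]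
  ring
end main

-- ===== sum juggling helpers =====
section helpers
variable {n : ℕ} (z u v : Fin n → ℝ)

lemma sum_pull3 (G : Fin n → Fin n → Fin n → Fin n → ℝ) :
    ∑ i, ∑ j, ∑ k, ∑ a, G i j k a = ∑ a, ∑ i, ∑ j, ∑ k, G i j k a := by
  rw [show (∑ i, ∑ j, ∑ k, ∑ a, G i j k a) = ∑ i, ∑ j, ∑ a, ∑ k, G i j k a from
    Finset.sum_congr rfl fun i _ => Finset.sum_congr rfl fun j _ => Finset.sum_comm]
  rw [show (∑ i, ∑ j, ∑ a, ∑ k, G i j k a) = ∑ i, ∑ a, ∑ j, ∑ k, G i j k a from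
    Finset.sum_congr rfl fun i _ => Finset.sum_comm]
  exact Finset.sum_comm

lemma sum_pull2 (G : Fin n → Fin n → Fin n → ℝ) :
    ∑ i, ∑ j, ∑ a, G i j a = ∑ a, ∑ i, ∑ j, G i j a := by
  rw [show (∑ i, ∑ j, ∑ a, G i j a) = ∑ i, ∑ a, ∑ j, G i j a from
    Finset.sum_congr rfl fun i _ => Finset.sum_comm]
  exact Finset.sum_comm

lemma sum_pull22 (G : Fin n → Fin n → Fin n → Fin n → ℝ) :
    ∑ l, ∑ m, ∑ a, ∑ b, G l m a b = ∑ a, ∑ b, ∑ l, ∑ m, G l m a b := by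
  rw [show (∑ l, ∑ m, ∑ a, ∑ b, G l m a b) = ∑ l, ∑ a, ∑ m, ∑ b, G l m a b from
    Finset.sum_congr rfl fun l _ => Finset.sum_comm]
  rw [show (∑ l, ∑ a, ∑ m, ∑ b, G l m a b) = ∑ a, ∑ l, ∑ m, ∑ b, G l m a b from
    Finset.sum_comm]
  refine Finset.sum_congr rfl fun a _ => ?_
  rw [show (∑ l, ∑ m, ∑ b, G l m a b) = ∑ l, ∑ b, ∑ m, G l m a b from
    Finset.sum_congr rfl fun l _ => Finset.sum_comm]
  exact Finset.sum_comm

lemma fact2 (c : Fin n → ℝ) (d : Fin n → Fin n → ℝ) :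
    ∑ i, ∑ j, ∑ k, c i * d j k = (∑ i, c i) * (∑ j, ∑ k, d j k) := by
  rw [Finset.sum_mul]
  exact Finset.sum_congr rfl fun i _ => by
    rw [Finset.mul_sum]
    exact Finset.sum_congr rfl fun j _ => by rw [Finset.mul_sum]

lemma fact1 (c : Fin n → ℝ) (d : Fin n → ℝ) :
    ∑ i, ∑ j, c i * d j = (∑ i, c i) * (∑ j, d j) := by
  rw [Finset.sum_mul]
  exact Finset.sum_congr rfl fun i _ => by rw [Finset.mul_sum]

lemma T1h (U : Fin n → Fin n → ℝ) (B : Fin n → Fin n → Fin n → ℝ) :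
    ∑ i, ∑ j, ∑ k, (∑ a, U a i * B a j k) * (z i * z j * z k)
      = ∑ a, (∑ i, U a i * z i) * (∑ j, ∑ k, B a j k * (z j * z k)) := by
  have e1 : ∑ i, ∑ j, ∑ k, (∑ a, U a i * B a j k) * (z i * z j * z k)
      = ∑ i, ∑ j, ∑ k, ∑ a, (U a i * z i) * (B a j k * (z j * z k)) := by
    refine Finset.sum_congr rfl fun i _ => Finset.sum_congr rfl fun j _ =>
      Finset.sum_congr rfl fun k _ => ?_
    rw [Finset.sum_mul]
    exact Finset.sum_congr rfl fun a _ => by ring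
  rw [e1, sum_pull3]
  exact Finset.sum_congr rfl fun a _ => fact2 _ _

lemma T2h (U : Fin n → Fin n → ℝ) (B : Fin n → Fin n → Fin n → ℝ) :
    ∑ i, ∑ j, ∑ k, (∑ a, U a j * B a i k) * (z i * z j * z k)
      = ∑ a, (∑ i, U a i * z i) * (∑ j, ∑ k, B a j k * (z j * z k)) := by
  have e1 : ∑ i, ∑ j, ∑ k, (∑ a, U a j * B a i k) * (z i * z j * z k)
      = ∑ i, ∑ j, ∑ k, ∑ a, (U a j * z j) * (B a i k * (z i * z k)) := by
    refine Finset.sum_congr rfl fun i _ => Finset.sum_congr rfl fun j _ =>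
      Finset.sum_congr rfl fun k _ => ?_
    rw [Finset.sum_mul]
    exact Finset.sum_congr rfl fun a _ => by ring
  rw [e1, sum_pull3]
  refine Finset.sum_congr rfl fun a _ => ?_
  rw [Finset.sum_comm]
  exact fact2 _ _

lemma T3h (U : Fin n → Fin n → ℝ) (B : Fin n → Fin n → Fin n → ℝ) :
    ∑ i, ∑ j, ∑ k, (∑ a, U a k * B a i j) * (z i * z j * z k)
      = ∑ a, (∑ i, U a i * z i) * (∑ j, ∑ k, B a j k * (z j * z k)) := by
  have e1 : ∑ i, ∑ j, ∑ k, (∑ a, U a k * B a i j) * (z i * z j * z k)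
      = ∑ i, ∑ j, ∑ k, ∑ a, (U a k * z k) * (B a i j * (z i * z j)) := by
    refine Finset.sum_congr rfl fun i _ => Finset.sum_congr rfl fun j _ =>
      Finset.sum_congr rfl fun k _ => ?_
    rw [Finset.sum_mul]
    exact Finset.sum_congr rfl fun a _ => by ring
  rw [e1, sum_pull3]
  refine Finset.sum_congr rfl fun a _ => ?_
  rw [show (∑ i, ∑ j, ∑ k, (U a k * z k) * (B a i j * (z i * z j)))
      = ∑ i, ∑ k, ∑ j, (U a k * z k) * (B a i j * (z i * z j)) from
    Finset.sum_congr rfl fun i _ => Finset.sum_comm]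
  rw [show (∑ i, ∑ k, ∑ j, (U a k * z k) * (B a i j * (z i * z j)))
      = ∑ k, ∑ i, ∑ j, (U a k * z k) * (B a i j * (z i * z j)) from Finset.sum_comm]
  exact fact2 _ _

lemma H2a (U : Fin n → ℝ) (B : Fin n → Fin n → Fin n → ℝ) :
    ∑ j, ∑ k, (∑ b, U b * B b j k) * (z j * z k)
      = ∑ b, U b * (∑ j, ∑ k, B b j k * (z j * z k)) := by
  have e1 : ∑ j, ∑ k, (∑ b, U b * B b j k) * (z j * z k)
      = ∑ j, ∑ k, ∑ b, U b * (B b j k * (z j * z k)) := by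
    refine Finset.sum_congr rfl fun j _ => Finset.sum_congr rfl fun k _ => ?_
    rw [Finset.sum_mul]
    exact Finset.sum_congr rfl fun b _ => by ring
  rw [e1, sum_pull2]
  exact Finset.sum_congr rfl fun b _ => by
    rw [Finset.mul_sum]
    exact Finset.sum_congr rfl fun j _ => by rw [Finset.mul_sum]

lemma H2b (W : Fin n → Fin n → ℝ) (C : Fin n → Fin n → ℝ) :
    ∑ j, ∑ k, (∑ b, W b j * C b k) * (z j * z k)
      = ∑ b, (∑ j, W b j * z j) * (∑ k, C b k * z k) := by
  have e1 : ∑ j, ∑ k, (∑ b, W b j * C b k) * (z j * z k)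
      = ∑ j, ∑ k, ∑ b, (W b j * z j) * (C b k * z k) := by
    refine Finset.sum_congr rfl fun j _ => Finset.sum_congr rfl fun k _ => ?_
    rw [Finset.sum_mul]
    exact Finset.sum_congr rfl fun b _ => by ring
  rw [e1, sum_pull2]
  exact Finset.sum_congr rfl fun b _ => fact1 _ _

lemma H2c (W : Fin n → Fin n → ℝ) (C : Fin n → Fin n → ℝ) :
    ∑ j, ∑ k, (∑ b, W b k * C b j) * (z j * z k)
      = ∑ b, (∑ j, W b j * z j) * (∑ k, C b k * z k) := by
  have e1 : ∑ j, ∑ k, (∑ b, W b k * C b j) * (z j * z k)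
      = ∑ j, ∑ k, ∑ b, (W b k * z k) * (C b j * z j) := by
    refine Finset.sum_congr rfl fun j _ => Finset.sum_congr rfl fun k _ => ?_
    rw [Finset.sum_mul]
    exact Finset.sum_congr rfl fun b _ => by ring
  rw [e1, sum_pull2]
  refine Finset.sum_congr rfl fun b _ => ?_
  rw [Finset.sum_comm]
  exact fact1 _ _

lemma W2h (K : Fin n → Fin n → Fin n → Fin n → ℝ) (L : Fin n → Fin n → Fin n → Fin n → ℝ) :
    ∑ l, ∑ m, (u l * v m) * (∑ a, ∑ b, K l a b m * L m a b l)
      = ∑ a, ∑ b, ∑ l, ∑ m, (u l * K l a b m) * (v m * L m a b l) := by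
  have e1 : ∑ l, ∑ m, (u l * v m) * (∑ a, ∑ b, K l a b m * L m a b l)
      = ∑ l, ∑ m, ∑ a, ∑ b, (u l * K l a b m) * (v m * L m a b l) := by
    refine Finset.sum_congr rfl fun l _ => Finset.sum_congr rfl fun m _ => ?_
    rw [Finset.mul_sum]
    refine Finset.sum_congr rfl fun a _ => ?_
    rw [Finset.mul_sum]
    exact Finset.sum_congr rfl fun b _ => by ring
  rw [e1, sum_pull22]

lemma W1h (K L : Fin n → Fin n → ℝ) :
    ∑ l, ∑ m, (u l * v m) * (∑ d, K l d * L m d)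
      = ∑ d, (∑ l, u l * K l d) * (∑ m, v m * L m d) := by
  have e1 : ∑ l, ∑ m, (u l * v m) * (∑ d, K l d * L m d)
      = ∑ l, ∑ m, ∑ d, (u l * K l d) * (v m * L m d) := by
    refine Finset.sum_congr rfl fun l _ => Finset.sum_congr rfl fun m _ => ?_
    rw [Finset.mul_sum]
    exact Finset.sum_congr rfl fun d _ => by ring
  rw [e1, sum_pull2]
  exact Finset.sum_congr rfl fun d _ => fact1 _ _
end helpers

-- ===== z-contracted objects =====
def gZ {n : ℕ} (f : (Fin n → ℝ) → ℝ) (z : Fin n → ℝ) (l a : Fin n) : (Fin n → ℝ) → ℝ :=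
  fun x => ∑ i, Gamma f a l i x * z i
def qZ {n : ℕ} (f : (Fin n → ℝ) → ℝ) (z : Fin n → ℝ) (a : Fin n) : (Fin n → ℝ) → ℝ :=
  fun x => ∑ j, ∑ k, FP f a j k x * (z j * z k)
def a3Z {n : ℕ} (f : (Fin n → ℝ) → ℝ) (z : Fin n → ℝ) : (Fin n → ℝ) → ℝ :=
  fun x => ∑ i, ∑ j, ∑ k, FP f i j k x * (z i * z j * z k)

section zsec
variable {n : ℕ} {Ω : Set (Fin n → ℝ)} (hΩ : IsOpen Ω) {f : (Fin n → ℝ) → ℝ}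
  (hf : SmOn Ω f) (hconv : ∀ x ∈ Ω, (hessMat f x).PosDef)
  (hpar : ParallelFP f Ω) (z u v : Fin n → ℝ)
include hΩ hf

omit hf in
lemma hpar' (hpar : ParallelFP f Ω) (i j k l : Fin n) {x : Fin n → ℝ} (hx : x ∈ Ω) :
    pd l (FP f i j k) x = ∑ m, (Gamma f m l i x * FP f m j k x
      + Gamma f m l j x * FP f i m k x + Gamma f m l k x * FP f i j m x) := by
  have h := hpar i j k l x hx
  unfold FPcov at h
  linarith

include hconv
lemma sm_gZ (l a : Fin n) : SmOn Ω (gZ f z l a) :=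
  SmOn.sum fun i _ => (sm_Gamma hΩ hf hconv a l i).mul hΩ (SmOn.const _)

omit hconv in
lemma sm_qZ (a : Fin n) : SmOn Ω (qZ f z a) :=
  SmOn.sum fun j _ => SmOn.sum fun k _ => (sm_FP hΩ hf a j k).mul hΩ (SmOn.const _)

omit hconv in
lemma sm_a3Z : SmOn Ω (a3Z f z) :=
  SmOn.sum fun i _ => SmOn.sum fun j _ => SmOn.sum fun k _ =>
    (sm_FP hΩ hf i j k).mul hΩ (SmOn.const _)

include hpar
omit hconv in
lemma pd_a3 {x : Fin n → ℝ} (hx : x ∈ Ω) (l : Fin n) :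
    pd l (a3Z f z) x = 3 * ∑ a, gZ f z l a x * qZ f z a x := by
  have step1 : pd l (a3Z f z) x
      = ∑ i, ∑ j, ∑ k, pd l (FP f i j k) x * (z i * z j * z k) := by
    show pd l (fun x => ∑ i, ∑ j, ∑ k, FP f i j k x * (z i * z j * z k)) x = _
    rw [pd_sum (fun i _ => ((SmOn.sum fun j _ => SmOn.sum fun k _ =>
      (sm_FP hΩ hf i j k).mul hΩ (SmOn.const _)).diffAt hΩ hx)) l]
    refine Finset.sum_congr rfl fun i _ => ?_
    rw [pd_sum (fun j _ => ((SmOn.sum fun k _ =>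
      (sm_FP hΩ hf i j k).mul hΩ (SmOn.const _)).diffAt hΩ hx)) l]
    refine Finset.sum_congr rfl fun j _ => ?_
    rw [pd_sum (fun k _ => (((sm_FP hΩ hf i j k).mul hΩ (SmOn.const _)).diffAt hΩ hx)) l]
    refine Finset.sum_congr rfl fun k _ => ?_
    rw [pd_mul_const ((sm_FP hΩ hf i j k).diffAt hΩ hx)]
  rw [step1]
  have step2 : ∑ i, ∑ j, ∑ k, pd l (FP f i j k) x * (z i * z j * z k)
      = (∑ i, ∑ j, ∑ k, (∑ a, Gamma f a l i x * FP f a j k x) * (z i * z j * z k))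
        + (∑ i, ∑ j, ∑ k, (∑ a, Gamma f a l j x * FP f i a k x) * (z i * z j * z k))
        + (∑ i, ∑ j, ∑ k, (∑ a, Gamma f a l k x * FP f i j a x) * (z i * z j * z k)) := by
    rw [← Finset.sum_add_distrib, ← Finset.sum_add_distrib]
    refine Finset.sum_congr rfl fun i _ => ?_
    rw [← Finset.sum_add_distrib, ← Finset.sum_add_distrib]
    refine Finset.sum_congr rfl fun j _ => ?_
    rw [← Finset.sum_add_distrib, ← Finset.sum_add_distrib]
    refine Finset.sum_congr rfl fun k _ => ?_
    rw [hpar' hΩ hpar i j k l hx, Finset.sum_add_distrib, Finset.sum_add_distrib]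
    ring
  rw [step2]
  have s1 : ∑ i, ∑ j, ∑ k, (∑ a, Gamma f a l i x * FP f a j k x) * (z i * z j * z k)
      = ∑ a, gZ f z l a x * qZ f z a x := T1h z _ _
  have s2 : ∑ i, ∑ j, ∑ k, (∑ a, Gamma f a l j x * FP f i a k x) * (z i * z j * z k)
      = ∑ a, gZ f z l a x * qZ f z a x := by
    have e : ∀ i j k, (∑ a, Gamma f a l j x * FP f i a k x)
        = ∑ a, Gamma f a l j x * FP f a i k x := by
      intro i j k
      exact Finset.sum_congr rfl fun a _ => by rw [FP_swap12 hΩ hf hx i a k]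
    rw [Finset.sum_congr rfl fun i _ => Finset.sum_congr rfl fun j _ =>
      Finset.sum_congr rfl fun k _ => by rw [e i j k]]
    exact T2h z _ _
  have s3 : ∑ i, ∑ j, ∑ k, (∑ a, Gamma f a l k x * FP f i j a x) * (z i * z j * z k)
      = ∑ a, gZ f z l a x * qZ f z a x := by
    have e : ∀ i j k, (∑ a, Gamma f a l k x * FP f i j a x)
        = ∑ a, Gamma f a l k x * FP f a i j x := by
      intro i j k
      refine Finset.sum_congr rfl fun a _ => ?_
      rw [FP_rot hΩ hf hx i j a, FP_rot hΩ hf hx j a i]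
    rw [Finset.sum_congr rfl fun i _ => Finset.sum_congr rfl fun j _ =>
      Finset.sum_congr rfl fun k _ => by rw [e i j k]]
    exact T3h z _ _
  rw [s1, s2, s3]
  ring

omit hconv in
lemma pd_qZ {p : Fin n → ℝ} (hp : p ∈ Ω) (a m : Fin n) :
    pd m (qZ f z a) p = ∑ b, Gamma f b m a p * qZ f z b p
      + 2 * ∑ b, gZ f z m b p * (∑ k, FP f a b k p * z k) := by
  have step1 : pd m (qZ f z a) p
      = ∑ j, ∑ k, pd m (FP f a j k) p * (z j * z k) := by
    show pd m (fun x => ∑ j, ∑ k, FP f a j k x * (z j * z k)) p = _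
    rw [pd_sum (fun j _ => ((SmOn.sum fun k _ =>
      (sm_FP hΩ hf a j k).mul hΩ (SmOn.const _)).diffAt hΩ hp)) m]
    refine Finset.sum_congr rfl fun j _ => ?_
    rw [pd_sum (fun k _ => (((sm_FP hΩ hf a j k).mul hΩ (SmOn.const _)).diffAt hΩ hp)) m]
    refine Finset.sum_congr rfl fun k _ => ?_
    rw [pd_mul_const ((sm_FP hΩ hf a j k).diffAt hΩ hp)]
  rw [step1]
  have step2 : ∑ j, ∑ k, pd m (FP f a j k) p * (z j * z k)
      = (∑ j, ∑ k, (∑ b, Gamma f b m a p * FP f b j k p) * (z j * z k))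
        + (∑ j, ∑ k, (∑ b, Gamma f b m j p * FP f a b k p) * (z j * z k))
        + (∑ j, ∑ k, (∑ b, Gamma f b m k p * FP f a j b p) * (z j * z k)) := by
    rw [← Finset.sum_add_distrib, ← Finset.sum_add_distrib]
    refine Finset.sum_congr rfl fun j _ => ?_
    rw [← Finset.sum_add_distrib, ← Finset.sum_add_distrib]
    refine Finset.sum_congr rfl fun k _ => ?_
    rw [hpar' hΩ hpar a j k m hp, Finset.sum_add_distrib, Finset.sum_add_distrib]
    ring
  rw [step2]
  have s1 : ∑ j, ∑ k, (∑ b, Gamma f b m a p * FP f b j k p) * (z j * z k)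
      = ∑ b, Gamma f b m a p * qZ f z b p := H2a z _ _
  have s2 : ∑ j, ∑ k, (∑ b, Gamma f b m j p * FP f a b k p) * (z j * z k)
      = ∑ b, gZ f z m b p * (∑ k, FP f a b k p * z k) := by
    have := H2b z (fun b j => Gamma f b m j p) (fun b k => FP f a b k p)
    rw [this]
    rfl
  have s3 : ∑ j, ∑ k, (∑ b, Gamma f b m k p * FP f a j b p) * (z j * z k)
      = ∑ b, gZ f z m b p * (∑ k, FP f a b k p * z k) := by
    have := H2c z (fun b k => Gamma f b m k p) (fun b j => FP f a j b p)
    rw [this]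
    refine Finset.sum_congr rfl fun b _ => ?_
    have : ∑ k, FP f a b k p * z k = ∑ k, FP f a k b p * z k := by
      refine Finset.sum_congr rfl fun k _ => ?_
      rw [FP_swap23 hΩ hf hp a b k]
    rw [this]
    rfl
  rw [s1, s2, s3]
  ring

omit hpar in
lemma pd_gZ {p : Fin n → ℝ} (hp : p ∈ Ω) (l a m : Fin n) :
    pd m (gZ f z l a) p = ∑ i, pd m (Gamma f a l i) p * z i := by
  show pd m (fun x => ∑ i, Gamma f a l i x * z i) p = _
  rw [pd_sum (fun i _ => (((sm_Gamma hΩ hf hconv a l i).mul hΩ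
    (SmOn.const _)).diffAt hΩ hp)) m]
  exact Finset.sum_congr rfl fun i _ => pd_mul_const ((sm_Gamma hΩ hf hconv a l i).diffAt hΩ hp) _ m

lemma psi_sym {p : Fin n → ℝ} (hp : p ∈ Ω) (l m : Fin n) :
    pd m (fun x => ∑ a, gZ f z l a x * qZ f z a x) p
      = pd l (fun x => ∑ a, gZ f z m a x * qZ f z a x) p := by
  have hpsi : ∀ l' : Fin n, ∀ y ∈ Ω, pd l' (a3Z f z) y
      = 3 * ∑ a, gZ f z l' a y * qZ f z a y :=
    fun l' y hy => pd_a3 hΩ hf hpar z hy l'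
  have h3 : ∀ l' m' : Fin n, pd m' (fun x => 3 * ∑ a, gZ f z l' a x * qZ f z a x) p
      = 3 * pd m' (fun x => ∑ a, gZ f z l' a x * qZ f z a x) p := by
    intro l' m'
    exact pd_const_mul (SmOn.diffAt hΩ (SmOn.sum fun a _ =>
      (sm_gZ hΩ hf hconv z l' a).mul hΩ (sm_qZ hΩ hf z a)) hp) 3 m'
  have e1 : pd m (fun x => 3 * ∑ a, gZ f z l a x * qZ f z a x) p
      = pd m (pd l (a3Z f z)) p :=
    (pd_congr hΩ (fun y hy => (hpsi l y hy).symm) hp m).symm ▸ rfl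
  have e1' : pd m (pd l (a3Z f z)) p
      = pd m (fun x => 3 * ∑ a, gZ f z l a x * qZ f z a x) p :=
    pd_congr hΩ (fun y hy => hpsi l y hy) hp m
  have e2' : pd l (pd m (a3Z f z)) p
      = pd l (fun x => 3 * ∑ a, gZ f z m a x * qZ f z a x) p :=
    pd_congr hΩ (fun y hy => hpsi m y hy) hp l
  have := pd_comm hΩ (sm_a3Z hΩ hf z) hp m l
  have key : pd m (fun x => 3 * ∑ a, gZ f z l a x * qZ f z a x) p
      = pd l (fun x => 3 * ∑ a, gZ f z m a x * qZ f z a x) p := by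
    rw [← e1', ← e2', this]
  rw [h3 l m, h3 m l] at key
  linarith

omit hpar in
/-- expansion of the mixed derivative of Ψ -/
lemma pd_psi {p : Fin n → ℝ} (hp : p ∈ Ω) (l m : Fin n) :
    pd m (fun x => ∑ a, gZ f z l a x * qZ f z a x) p
      = ∑ a, (pd m (gZ f z l a) p * qZ f z a p + gZ f z l a p * pd m (qZ f z a) p) := by
  rw [pd_sum (fun a _ => ((sm_gZ hΩ hf hconv z l a).diffAt hΩ hp).fun_mul
    ((sm_qZ hΩ hf z a).diffAt hΩ hp)) m]
  exact Finset.sum_congr rfl fun a _ =>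
    pd_mul ((sm_gZ hΩ hf hconv z l a).diffAt hΩ hp) ((sm_qZ hΩ hf z a).diffAt hΩ hp) m

omit hΩ hf hconv hpar in
lemma J1 (x : Fin n → ℝ) (y : Fin n → Fin n → ℝ) :
    ∑ i, (∑ d, x d * y d i) * z i = ∑ d, x d * (∑ i, y d i * z i) := by
  have e1 : ∑ i, (∑ d, x d * y d i) * z i = ∑ i, ∑ d, x d * (y d i * z i) := by
    refine Finset.sum_congr rfl fun i _ => ?_
    rw [Finset.sum_mul]
    exact Finset.sum_congr rfl fun d _ => by ring
  rw [e1, Finset.sum_comm]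
  exact Finset.sum_congr rfl fun d _ => by rw [Finset.mul_sum]

/-- expansion of `pd m' Ψ_l'` into the three pieces -/
lemma psi_expand {p : Fin n → ℝ} (hp : p ∈ Ω) (l' m' : Fin n) :
    pd m' (fun x => ∑ a, gZ f z l' a x * qZ f z a x) p
      = (∑ a, (∑ i, pd m' (Gamma f a l' i) p * z i) * qZ f z a p)
        + ((∑ a, ∑ b, gZ f z l' a p * (Gamma f b m' a p * qZ f z b p))
          + 2 * ∑ a, ∑ b, gZ f z l' a p
              * (gZ f z m' b p * (∑ k, FP f a b k p * z k))) := by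
  rw [pd_psi hΩ hf hconv z hp l' m']
  have per_a : ∀ a, pd m' (gZ f z l' a) p * qZ f z a p
        + gZ f z l' a p * pd m' (qZ f z a) p
      = (∑ i, pd m' (Gamma f a l' i) p * z i) * qZ f z a p
        + ((∑ b, gZ f z l' a p * (Gamma f b m' a p * qZ f z b p))
          + 2 * ∑ b, gZ f z l' a p
              * (gZ f z m' b p * (∑ k, FP f a b k p * z k))) := by
    intro a
    rw [pd_gZ hΩ hf hconv z hp l' a m', pd_qZ hΩ hf hpar z hp a m']
    congr 1
    conv_rhs => rw [← Finset.mul_sum, ← Finset.mul_sum]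
    ring
  rw [Finset.sum_congr rfl fun a _ => per_a a]
  rw [Finset.sum_add_distrib, Finset.sum_add_distrib]
  congr 1
  congr 1
  rw [← Finset.mul_sum]

omit hconv hpar in
/-- symmetry of the third piece -/
lemma P3sym {p : Fin n → ℝ} (hp : p ∈ Ω) (l m : Fin n) :
    ∑ a, ∑ b, gZ f z l a p * (gZ f z m b p * (∑ k, FP f a b k p * z k))
      = ∑ a, ∑ b, gZ f z m a p * (gZ f z l b p * (∑ k, FP f a b k p * z k)) := by
  have hρ : ∀ a b : Fin n, (∑ k, FP f a b k p * z k) = ∑ k, FP f b a k p * z k := by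
    intro a b
    exact Finset.sum_congr rfl fun k _ => by rw [FP_swap12 hΩ hf hp a b k]
  rw [Finset.sum_comm]
  refine Finset.sum_congr rfl fun b _ => Finset.sum_congr rfl fun a _ => ?_
  rw [hρ b a]
  ring

/-- The symmetric identity on the first two pieces -/
lemma E12sym {p : Fin n → ℝ} (hp : p ∈ Ω) (l m : Fin n) :
    (∑ a, (∑ i, pd m (Gamma f a l i) p * z i) * qZ f z a p)
      + (∑ a, ∑ b, gZ f z l a p * (Gamma f b m a p * qZ f z b p))
    = (∑ a, (∑ i, pd l (Gamma f a m i) p * z i) * qZ f z a p)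
      + (∑ a, ∑ b, gZ f z m a p * (Gamma f b l a p * qZ f z b p)) := by
  have h1 := psi_expand hΩ hf hconv hpar z hp l m
  have h2 := psi_expand hΩ hf hconv hpar z hp m l
  have h3 := psi_sym hΩ hf hconv hpar z hp l m
  rw [h1, h2] at h3
  have h4 := P3sym hΩ hf z hp l m
  rw [h4] at h3
  linarith

/-- The main analytic identity. -/
lemma keyXY {p : Fin n → ℝ} (hp : p ∈ Ω) :
    ∑ a, ∑ d, ((∑ l, u l * Gamma f a l d p) * qZ f z a p) * (∑ m, v m * gZ f z m d p)
      = ∑ a, ∑ d, ((∑ m, v m * Gamma f a m d p) * qZ f z a p)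
          * (∑ l, u l * gZ f z l d p) := by
  -- difference of the P1 pieces
  have hΔ : ∀ l m : Fin n,
      (∑ a, (∑ i, pd m (Gamma f a l i) p * z i) * qZ f z a p)
        - (∑ a, (∑ i, pd l (Gamma f a m i) p * z i) * qZ f z a p)
      = 2 * (∑ a, ∑ d, (Gamma f a l d p * qZ f z a p) * gZ f z m d p)
        - 2 * (∑ a, ∑ d, (Gamma f a m d p * qZ f z a p) * gZ f z l d p) := by
    intro l m
    rw [← Finset.sum_sub_distrib]
    have per_a : ∀ a, (∑ i, pd m (Gamma f a l i) p * z i) * qZ f z a p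
          - (∑ i, pd l (Gamma f a m i) p * z i) * qZ f z a p
        = 2 * (∑ d, (Gamma f a l d p * qZ f z a p) * gZ f z m d p)
          - 2 * (∑ d, (Gamma f a m d p * qZ f z a p) * gZ f z l d p) := by
      intro a
      rw [← sub_mul, ← Finset.sum_sub_distrib]
      have e1 : ∀ i : Fin n, pd m (Gamma f a l i) p * z i - pd l (Gamma f a m i) p * z i
          = (∑ d, (2 * Gamma f a l d p) * Gamma f d m i p) * z i
            - (∑ d, (2 * Gamma f a m d p) * Gamma f d l i p) * z i := by
        intro i
        rw [← sub_mul, dGamma_antisym hΩ hf hconv hp a l i m, ← sub_mul]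
        congr 1
        rw [Finset.mul_sum, Finset.mul_sum]
        congr 1 <;> exact Finset.sum_congr rfl fun d _ => by ring
      rw [Finset.sum_congr rfl fun i _ => e1 i, Finset.sum_sub_distrib]
      rw [J1 z (fun d => 2 * Gamma f a l d p) (fun d i => Gamma f d m i p)]
      rw [J1 z (fun d => 2 * Gamma f a m d p) (fun d i => Gamma f d l i p)]
      show ((∑ d, 2 * Gamma f a l d p * gZ f z m d p)
          - ∑ d, 2 * Gamma f a m d p * gZ f z l d p) * qZ f z a p = _
      rw [sub_mul, Finset.sum_mul, Finset.sum_mul, Finset.mul_sum, Finset.mul_sum]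
      congr 1 <;> exact Finset.sum_congr rfl fun d _ => by ring
    rw [Finset.sum_congr rfl fun a _ => per_a a, Finset.sum_sub_distrib,
      ← Finset.mul_sum, ← Finset.mul_sum]
  -- now contract with u and v
  have hsym : ∀ l m : Fin n,
      (∑ a, (∑ i, pd m (Gamma f a l i) p * z i) * qZ f z a p)
        + (∑ a, ∑ b, gZ f z l a p * (Gamma f b m a p * qZ f z b p))
      = (∑ a, (∑ i, pd l (Gamma f a m i) p * z i) * qZ f z a p)
        + (∑ a, ∑ b, gZ f z m a p * (Gamma f b l a p * qZ f z b p)) :=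
    fun l m => E12sym hΩ hf hconv hpar z hp l m
  -- contraction of the P2 piece (l,m order)
  have cP2 : ∑ l, ∑ m, (u l * v m)
        * (∑ a, ∑ b, gZ f z l a p * (Gamma f b m a p * qZ f z b p))
      = ∑ a, ∑ d, ((∑ m, v m * Gamma f a m d p) * qZ f z a p)
          * (∑ l, u l * gZ f z l d p) := by
    rw [W2h u v (fun l a b m => gZ f z l a p) (fun m a b l => Gamma f b m a p * qZ f z b p)]
    rw [Finset.sum_comm]
    refine Finset.sum_congr rfl fun b _ => Finset.sum_congr rfl fun a _ => ?_
    rw [fact1 (fun l => u l * gZ f z l a p) (fun m => v m * (Gamma f b m a p * qZ f z b p))]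
    have : ∑ m, v m * (Gamma f b m a p * qZ f z b p)
        = (∑ m, v m * Gamma f b m a p) * qZ f z b p := by
      rw [Finset.sum_mul]
      exact Finset.sum_congr rfl fun m _ => by ring
    rw [this]
    ring
  -- contraction of the P2 piece (m,l order)
  have cP2' : ∑ l, ∑ m, (u l * v m)
        * (∑ a, ∑ b, gZ f z m a p * (Gamma f b l a p * qZ f z b p))
      = ∑ a, ∑ d, ((∑ l, u l * Gamma f a l d p) * qZ f z a p)
          * (∑ m, v m * gZ f z m d p) := by
    have pre : ∀ l m : Fin n, (∑ a, ∑ b, gZ f z m a p * (Gamma f b l a p * qZ f z b p))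
        = ∑ a, ∑ b, (Gamma f b l a p * qZ f z b p) * gZ f z m a p :=
      fun l m => Finset.sum_congr rfl fun a _ => Finset.sum_congr rfl fun b _ => by ring
    rw [Finset.sum_congr rfl fun l _ => Finset.sum_congr rfl fun m _ => by rw [pre l m]]
    rw [W2h u v (fun l a b m => Gamma f b l a p * qZ f z b p) (fun m a b l => gZ f z m a p)]
    rw [Finset.sum_comm]
    refine Finset.sum_congr rfl fun b _ => Finset.sum_congr rfl fun a _ => ?_
    rw [fact1 (fun l => u l * (Gamma f b l a p * qZ f z b p)) (fun m => v m * gZ f z m a p)]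
    have : ∑ l, u l * (Gamma f b l a p * qZ f z b p)
        = (∑ l, u l * Gamma f b l a p) * qZ f z b p := by
      rw [Finset.sum_mul]
      exact Finset.sum_congr rfl fun l _ => by ring
    rw [this]
  -- contraction of the curvature piece, first kind
  have cS : ∑ l, ∑ m, (u l * v m)
        * (∑ a, ∑ d, (Gamma f a l d p * qZ f z a p) * gZ f z m d p)
      = ∑ a, ∑ d, ((∑ l, u l * Gamma f a l d p) * qZ f z a p)
          * (∑ m, v m * gZ f z m d p) := by
    rw [W2h u v (fun l a d m => Gamma f a l d p * qZ f z a p) (fun m a d l => gZ f z m d p)]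
    refine Finset.sum_congr rfl fun a _ => Finset.sum_congr rfl fun d _ => ?_
    rw [fact1 (fun l => u l * (Gamma f a l d p * qZ f z a p)) (fun m => v m * gZ f z m d p)]
    have : ∑ l, u l * (Gamma f a l d p * qZ f z a p)
        = (∑ l, u l * Gamma f a l d p) * qZ f z a p := by
      rw [Finset.sum_mul]
      exact Finset.sum_congr rfl fun l _ => by ring
    rw [this]
  -- contraction of the curvature piece, second kind
  have cT : ∑ l, ∑ m, (u l * v m)
        * (∑ a, ∑ d, (Gamma f a m d p * qZ f z a p) * gZ f z l d p)
      = ∑ a, ∑ d, ((∑ m, v m * Gamma f a m d p) * qZ f z a p)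
          * (∑ l, u l * gZ f z l d p) := by
    have pre : ∀ l m : Fin n, (∑ a, ∑ d, (Gamma f a m d p * qZ f z a p) * gZ f z l d p)
        = ∑ a, ∑ d, gZ f z l d p * (Gamma f a m d p * qZ f z a p) :=
      fun l m => Finset.sum_congr rfl fun a _ => Finset.sum_congr rfl fun d _ => by ring
    rw [Finset.sum_congr rfl fun l _ => Finset.sum_congr rfl fun m _ => by rw [pre l m]]
    rw [W2h u v (fun l a d m => gZ f z l d p) (fun m a d l => Gamma f a m d p * qZ f z a p)]
    refine Finset.sum_congr rfl fun a _ => Finset.sum_congr rfl fun d _ => ?_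
    rw [fact1 (fun l => u l * gZ f z l d p) (fun m => v m * (Gamma f a m d p * qZ f z a p))]
    have : ∑ m, v m * (Gamma f a m d p * qZ f z a p)
        = (∑ m, v m * Gamma f a m d p) * qZ f z a p := by
      rw [Finset.sum_mul]
      exact Finset.sum_congr rfl fun m _ => by ring
    rw [this]
    ring
  -- assemble everything
  have main : ∑ l, ∑ m, (u l * v m)
        * ((∑ a, (∑ i, pd m (Gamma f a l i) p * z i) * qZ f z a p)
          + (∑ a, ∑ b, gZ f z l a p * (Gamma f b m a p * qZ f z b p)))
      = ∑ l, ∑ m, (u l * v m)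
        * ((∑ a, (∑ i, pd l (Gamma f a m i) p * z i) * qZ f z a p)
          + (∑ a, ∑ b, gZ f z m a p * (Gamma f b l a p * qZ f z b p))) :=
    Finset.sum_congr rfl fun l _ => Finset.sum_congr rfl fun m _ => by rw [hsym l m]
  -- split both sides
  have split : ∀ (F G : Fin n → Fin n → ℝ),
      ∑ l, ∑ m, (u l * v m) * (F l m + G l m)
        = (∑ l, ∑ m, (u l * v m) * F l m) + ∑ l, ∑ m, (u l * v m) * G l m := by
    intro F G
    rw [← Finset.sum_add_distrib]
    refine Finset.sum_congr rfl fun l _ => ?_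
    rw [← Finset.sum_add_distrib]
    exact Finset.sum_congr rfl fun m _ => by ring
  rw [split, split] at main
  -- difference of P1 contractions
  have hdiff : (∑ l, ∑ m, (u l * v m)
          * (∑ a, (∑ i, pd m (Gamma f a l i) p * z i) * qZ f z a p))
        - (∑ l, ∑ m, (u l * v m)
          * (∑ a, (∑ i, pd l (Gamma f a m i) p * z i) * qZ f z a p))
      = 2 * (∑ a, ∑ d, ((∑ l, u l * Gamma f a l d p) * qZ f z a p)
            * (∑ m, v m * gZ f z m d p))
        - 2 * (∑ a, ∑ d, ((∑ m, v m * Gamma f a m d p) * qZ f z a p)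
            * (∑ l, u l * gZ f z l d p)) := by
    rw [← cS, ← cT]
    rw [← Finset.sum_sub_distrib]
    rw [show (2 * (∑ l, ∑ m, (u l * v m)
          * (∑ a, ∑ d, (Gamma f a l d p * qZ f z a p) * gZ f z m d p))
        - 2 * (∑ l, ∑ m, (u l * v m)
          * (∑ a, ∑ d, (Gamma f a m d p * qZ f z a p) * gZ f z l d p)))
      = ∑ l, (2 * (∑ m, (u l * v m)
          * (∑ a, ∑ d, (Gamma f a l d p * qZ f z a p) * gZ f z m d p))
        - 2 * (∑ m, (u l * v m)
          * (∑ a, ∑ d, (Gamma f a m d p * qZ f z a p) * gZ f z l d p))) from by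
      rw [Finset.sum_sub_distrib, ← Finset.mul_sum, ← Finset.mul_sum]]
    refine Finset.sum_congr rfl fun l _ => ?_
    rw [← Finset.sum_sub_distrib]
    rw [show (2 * (∑ m, (u l * v m)
          * (∑ a, ∑ d, (Gamma f a l d p * qZ f z a p) * gZ f z m d p))
        - 2 * (∑ m, (u l * v m)
          * (∑ a, ∑ d, (Gamma f a m d p * qZ f z a p) * gZ f z l d p)))
      = ∑ m, (2 * ((u l * v m)
          * (∑ a, ∑ d, (Gamma f a l d p * qZ f z a p) * gZ f z m d p))
        - 2 * ((u l * v m)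
          * (∑ a, ∑ d, (Gamma f a m d p * qZ f z a p) * gZ f z l d p))) from by
      rw [Finset.sum_sub_distrib, ← Finset.mul_sum, ← Finset.mul_sum]]
    refine Finset.sum_congr rfl fun m _ => ?_
    rw [← mul_sub, hΔ l m]
    ring
  rw [cP2, cP2'] at main
  linarith [hdiff, main]
end zsec

lemma sum_rot3 {n : ℕ} (G : Fin n → Fin n → Fin n → ℝ) :
    ∑ i, ∑ j, ∑ k, G i j k = ∑ j, ∑ k, ∑ i, G i j k := by
  rw [Finset.sum_comm]
  exact Finset.sum_congr rfl fun j _ => Finset.sum_comm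

-- ===== final algebra lemmas =====
section final
variable {n : ℕ} {Ω : Set (Fin n → ℝ)} (hΩ : IsOpen Ω) {f : (Fin n → ℝ) → ℝ}
  (hf : SmOn Ω f) {p : Fin n → ℝ} (hp : p ∈ Ω) (z : Fin n → ℝ) (e : Fin n → Fin n → ℝ)
include hΩ hf hp

lemma Ap_rot (X Y W : Fin n → ℝ) : Ap f p X Y W = Ap f p Y W X := by
  unfold Ap
  have h1 : ∀ i j k : Fin n, FP f i j k p * X i * Y j * W k
      = FP f j k i p * X i * Y j * W k := fun i j k => by rw [FP_rot hΩ hf hp i j k]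
  calc ∑ i, ∑ j, ∑ k, FP f i j k p * X i * Y j * W k
      = ∑ i, ∑ j, ∑ k, FP f j k i p * X i * Y j * W k :=
        Finset.sum_congr rfl fun i _ => Finset.sum_congr rfl fun j _ =>
          Finset.sum_congr rfl fun k _ => h1 i j k
    _ = ∑ j, ∑ k, ∑ i, FP f j k i p * X i * Y j * W k := sum_rot3 _
    _ = ∑ i, ∑ j, ∑ k, FP f i j k p * Y i * W j * X k :=
        Finset.sum_congr rfl fun i _ => Finset.sum_congr rfl fun j _ =>
          Finset.sum_congr rfl fun k _ => by ring

omit hp in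
lemma sumq (w : Fin n → ℝ) : ∑ a, w a * qZ f z a p = Ap f p w z z := by
  unfold Ap qZ
  refine Finset.sum_congr rfl fun a _ => ?_
  rw [Finset.mul_sum]
  refine Finset.sum_congr rfl fun j _ => ?_
  rw [Finset.mul_sum]
  exact Finset.sum_congr rfl fun k _ => by ring

variable (hF : ∀ a b, hessInv f p a b = ∑ h, e h a * e h b)
include hF

lemma Klem (X Y : Fin n → ℝ) (a : Fin n) :
    ∑ l, ∑ d, (X l * Y d) * Gamma f a l d p = -∑ h, Ap f p X Y (e h) * e h a := by
  have per : ∀ l d : Fin n, (X l * Y d) * Gamma f a l d p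
      = ∑ b, -(hessInv f p a b * (FP f l d b p * (X l * Y d))) := by
    intro l d
    rw [Gamma_eq_FP hΩ hf hp a l d, Finset.sum_neg_distrib]
    have hh : ∑ b, hessInv f p a b * (FP f l d b p * (X l * Y d))
        = (∑ b, hessInv f p a b * FP f l d b p) * (X l * Y d) := by
      rw [Finset.sum_mul]
      exact Finset.sum_congr rfl fun b _ => by ring
    rw [hh]
    ring
  have step1 : ∑ l, ∑ d, (X l * Y d) * Gamma f a l d p
      = -∑ b, hessInv f p a b * (∑ l, ∑ d, FP f l d b p * (X l * Y d)) := by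
    rw [Finset.sum_congr rfl fun l _ => Finset.sum_congr rfl fun d _ => per l d]
    rw [sum_pull2, ← Finset.sum_neg_distrib]
    refine Finset.sum_congr rfl fun b _ => ?_
    rw [Finset.mul_sum, ← Finset.sum_neg_distrib]
    refine Finset.sum_congr rfl fun l _ => ?_
    rw [Finset.mul_sum, ← Finset.sum_neg_distrib]
  rw [step1]
  rw [Finset.sum_congr rfl fun b _ => by rw [hF a b]]
  rw [neg_inj]
  have step2 : ∑ b, (∑ h, e h a * e h b)
        * (∑ l, ∑ d, FP f l d b p * (X l * Y d))
      = ∑ h, (∑ b, e h b * (∑ l, ∑ d, FP f l d b p * (X l * Y d))) * e h a := by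
    have per2 : ∀ b, (∑ h, e h a * e h b) * (∑ l, ∑ d, FP f l d b p * (X l * Y d))
        = ∑ h, (e h b * (∑ l, ∑ d, FP f l d b p * (X l * Y d))) * e h a := by
      intro b
      rw [Finset.sum_mul]
      exact Finset.sum_congr rfl fun h _ => by ring
    rw [Finset.sum_congr rfl fun b _ => per2 b, Finset.sum_comm]
    exact Finset.sum_congr rfl fun h _ => by rw [Finset.sum_mul]
  rw [step2]
  refine Finset.sum_congr rfl fun h _ => ?_
  congr 1
  show ∑ b, e h b * (∑ l, ∑ d, FP f l d b p * (X l * Y d))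
      = ∑ i, ∑ j, ∑ k, FP f i j k p * X i * Y j * e h k
  rw [sum_rot3 (fun i j k => FP f i j k p * X i * Y j * e h k)]
  rw [sum_rot3 (fun j k i => FP f i j k p * X i * Y j * e h k)]
  refine Finset.sum_congr rfl fun b _ => ?_
  rw [Finset.mul_sum]
  refine Finset.sum_congr rfl fun l _ => ?_
  rw [Finset.mul_sum]
  exact Finset.sum_congr rfl fun d _ => by ring

omit hF hp in
lemma ApLin2 (c : Fin n → ℝ) (X W : Fin n → ℝ) :
    Ap f p X (fun d => -∑ g, c g * e g d) W = -∑ g, c g * Ap f p X (e g) W := by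
  unfold Ap
  have per : ∀ i j k : Fin n, FP f i j k p * X i * (-∑ g, c g * e g j) * W k
      = ∑ g, -(c g * (FP f i j k p * X i * e g j * W k)) := by
    intro i j k
    rw [Finset.sum_neg_distrib, show FP f i j k p * X i * (-∑ g, c g * e g j) * W k
        = -((FP f i j k p * X i * W k) * ∑ g, c g * e g j) from by ring, Finset.mul_sum]
    rw [neg_inj]
    exact Finset.sum_congr rfl fun g _ => by ring
  rw [Finset.sum_congr rfl fun i _ => Finset.sum_congr rfl fun j _ =>
    Finset.sum_congr rfl fun k _ => per i j k]
  rw [Finset.sum_congr rfl fun i _ =>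
    (sum_pull2 fun j k g => -(c g * (FP f i j k p * X i * e g j * W k)))]
  rw [Finset.sum_comm]
  rw [← Finset.sum_neg_distrib]
  refine Finset.sum_congr rfl fun g _ => ?_
  rw [show -(c g * ∑ i, ∑ j, ∑ k, FP f i j k p * X i * e g j * W k)
      = ∑ i, -(c g * ∑ j, ∑ k, FP f i j k p * X i * e g j * W k) from by
    rw [Finset.mul_sum, ← Finset.sum_neg_distrib]]
  refine Finset.sum_congr rfl fun i _ => ?_
  rw [show -(c g * ∑ j, ∑ k, FP f i j k p * X i * e g j * W k)
      = ∑ j, -(c g * ∑ k, FP f i j k p * X i * e g j * W k) from by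
    rw [Finset.mul_sum, ← Finset.sum_neg_distrib]]
  refine Finset.sum_congr rfl fun j _ => ?_
  rw [show -(c g * ∑ k, FP f i j k p * X i * e g j * W k)
      = ∑ k, -(c g * (FP f i j k p * X i * e g j * W k)) from by
    rw [Finset.mul_sum, ← Finset.sum_neg_distrib]]

end final

open Matrix in
/-- from an orthonormal basis for `G_p`, the inverse Hessian is `∑ e_h e_hᵀ` -/
lemma Fsum {n : ℕ} {f : (Fin n → ℝ) → ℝ} {p : Fin n → ℝ}
    (hdet : (hessMat f p).det ≠ 0) (e : Fin n → Fin n → ℝ)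
    (horth : ∀ j k, Gp f p (e j) (e k) = if j = k then 1 else 0) :
    ∀ a b, hessInv f p a b = ∑ h, e h a * e h b := by
  classical
  set H := hessMat f p with hH
  set E : Matrix (Fin n) (Fin n) ℝ := Matrix.of (fun a h => e h a) with hE
  have h1 : Eᵀ * (H * E) = 1 := by
    ext j k
    rw [Matrix.mul_apply, Matrix.one_apply]
    have : ∀ a, Eᵀ j a * (H * E) a k = ∑ b, H a b * e j a * e k b := by
      intro a
      rw [Matrix.mul_apply, Finset.mul_sum]
      refine Finset.sum_congr rfl fun b _ => ?_
      show e j a * (H a b * e k b) = _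
      ring
    rw [Finset.sum_congr rfl fun a _ => this a]
    exact horth j k
  have h2 : (H * E) * Eᵀ = 1 := mul_eq_one_comm.mp h1
  have h3 : H * (E * Eᵀ) = 1 := by rw [← Matrix.mul_assoc]; exact h2
  have h4 : H⁻¹ = E * Eᵀ := Matrix.inv_eq_right_inv h3
  intro a b
  show (H⁻¹) a b = _
  rw [h4, Matrix.mul_apply]
  exact Finset.sum_congr rfl fun h _ => rfl


/-- Case 𝔠ₙ does not occur (Lemma 4.4). -/
theorem stmt7 {n : ℕ} (hn : 2 ≤ n) (Ω : Set (Fin n → ℝ)) (hΩo : IsOpen Ω)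
    (f : (Fin n → ℝ) → ℝ) (hf : ContDiffOn ℝ (⊤ : ℕ∞) f Ω)
    (hconv : ∀ x ∈ Ω, (hessMat f x).PosDef)
    (hpar : ParallelFP f Ω) :
    ¬ ∃ p ∈ Ω, ∃ e : Fin n → (Fin n → ℝ), ∃ μ : Fin n → ℝ,
      (∀ j k : Fin n, Gp f p (e j) (e k) = if j = k then 1 else 0) ∧
      (∀ v : Fin n → ℝ, Gp f p v v = 1 →
        Ap f p v v v ≤ μ ⟨0, by omega⟩) ∧
      Ap f p (e ⟨0, by omega⟩) (e ⟨0, by omega⟩) (e ⟨0, by omega⟩) = μ ⟨0, by omega⟩ ∧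
      (∀ j k : Fin n, Ap f p (e ⟨0, by omega⟩) (e j) (e k) = if j = k then μ j else 0) ∧
      (∀ j : Fin n, j ≠ ⟨0, by omega⟩ → μ j = μ ⟨0, by omega⟩ / 2 ∧ 0 < μ j) := by
  rintro ⟨p, hp, e, μ, horth, -, -, hdiag, hhalf⟩
  have h0n : 0 < n := by omega
  have h1n : 1 < n := by omega
  set i0 : Fin n := ⟨0, by omega⟩ with hi0
  set i1 : Fin n := ⟨1, by omega⟩ with hi1
  have hne : i1 ≠ i0 := by
    simp only [hi0, hi1, ne_eq, Fin.mk.injEq]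
    omega
  obtain ⟨hμ1, hν⟩ := hhalf i1 hne
  have hfS : SmOn Ω f := hf.of_le (by simp)
  have hdet : (hessMat f p).det ≠ 0 := det_ne hΩo hfS hconv p hp
  have hF := Fsum hdet e horth
  have key := keyXY hΩo hfS hconv hpar (e i1) (e i0) (e i1) hp
  -- the `G` vectors
  have hGline : ∀ Y : Fin n → ℝ, ∀ dd : Fin n, (∑ m, Y m * gZ f (e i1) m dd p)
      = -∑ h, Ap f p Y (e i1) (e h) * e h dd := by
    intro Y dd
    have e1 : ∀ m, Y m * gZ f (e i1) m dd p
        = ∑ i, (Y m * e i1 i) * Gamma f dd m i p := by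
      intro m
      show Y m * (∑ i, Gamma f dd m i p * e i1 i) = _
      rw [Finset.mul_sum]
      exact Finset.sum_congr rfl fun i _ => by ring
    rw [Finset.sum_congr rfl fun m _ => e1 m]
    exact Klem hΩo hfS hp e hF Y (e i1) dd
  -- generic evaluation of the double contractions
  have hXXgen : ∀ (X W : Fin n → ℝ),
      (∑ a, ∑ d, ((∑ l, X l * Gamma f a l d p) * qZ f (e i1) a p) * W d)
        = -∑ h, Ap f p X W (e h) * Ap f p (e h) (e i1) (e i1) := by
    intro X W
    have e2 : ∀ a, ∑ d, ((∑ l, X l * Gamma f a l d p) * qZ f (e i1) a p) * W d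
        = (∑ l, ∑ d, (X l * W d) * Gamma f a l d p) * qZ f (e i1) a p := by
      intro a
      have per_d : ∀ d, ((∑ l, X l * Gamma f a l d p) * qZ f (e i1) a p) * W d
          = ∑ l, ((X l * W d) * Gamma f a l d p) * qZ f (e i1) a p := by
        intro d
        rw [Finset.sum_mul, Finset.sum_mul]
        exact Finset.sum_congr rfl fun l _ => by ring
      rw [Finset.sum_congr rfl fun d _ => per_d d, Finset.sum_comm]
      rw [Finset.sum_mul]
      exact Finset.sum_congr rfl fun l _ => by rw [Finset.sum_mul]
    rw [Finset.sum_congr rfl fun a _ => e2 a]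
    rw [Finset.sum_congr rfl fun a _ => by rw [Klem hΩo hfS hp e hF X W a]]
    have e3 : ∀ a, (-∑ h, Ap f p X W (e h) * e h a) * qZ f (e i1) a p
        = ∑ h, -(Ap f p X W (e h) * (e h a * qZ f (e i1) a p)) := by
      intro a
      rw [show (-∑ h, Ap f p X W (e h) * e h a) * qZ f (e i1) a p
          = -((∑ h, Ap f p X W (e h) * e h a) * qZ f (e i1) a p) from by ring]
      rw [Finset.sum_mul, ← Finset.sum_neg_distrib]
      exact Finset.sum_congr rfl fun h _ => by ring
    rw [Finset.sum_congr rfl fun a _ => e3 a, Finset.sum_comm, ← Finset.sum_neg_distrib]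
    refine Finset.sum_congr rfl fun h _ => ?_
    rw [show (∑ a, -(Ap f p X W (e h) * (e h a * qZ f (e i1) a p)))
        = -(Ap f p X W (e h) * ∑ a, e h a * qZ f (e i1) a p) from by
      rw [Finset.mul_sum, ← Finset.sum_neg_distrib]]
    rw [sumq hΩo hfS (e i1) (fun a => e h a)]
  -- rewrite both sides of `key`
  have eL : (∑ a, ∑ d, ((∑ l, e i0 l * Gamma f a l d p) * qZ f (e i1) a p)
        * (∑ m, e i1 m * gZ f (e i1) m d p))
      = -∑ h, Ap f p (e i0) (fun d => ∑ m, e i1 m * gZ f (e i1) m d p) (e h)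
          * Ap f p (e h) (e i1) (e i1) := hXXgen (e i0) _
  have eR : (∑ a, ∑ d, ((∑ m, e i1 m * Gamma f a m d p) * qZ f (e i1) a p)
        * (∑ l, e i0 l * gZ f (e i1) l d p))
      = -∑ h, Ap f p (e i1) (fun d => ∑ l, e i0 l * gZ f (e i1) l d p) (e h)
          * Ap f p (e h) (e i1) (e i1) := hXXgen (e i1) _
  rw [eL, eR] at key
  -- evaluate the middle vectors
  have hGv : (fun d => ∑ m, e i1 m * gZ f (e i1) m d p)
      = fun d => -∑ g, Ap f p (e i1) (e i1) (e g) * e g d :=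
    funext fun d => hGline (e i1) d
  have hGu : (fun d => ∑ l, e i0 l * gZ f (e i1) l d p)
      = fun d => -∑ g, (if i1 = g then μ i1 else 0) * e g d := by
    funext d
    rw [hGline (e i0) d, neg_inj]
    exact Finset.sum_congr rfl fun g _ => by rw [hdiag i1 g]
  rw [hGv, hGu] at key
  have hL2 : ∀ h, Ap f p (e i0) (fun d => -∑ g, Ap f p (e i1) (e i1) (e g) * e g d) (e h)
      = -(Ap f p (e i1) (e i1) (e h) * μ h) := by
    intro h
    rw [ApLin2 hΩo hfS e (fun g => Ap f p (e i1) (e i1) (e g)) (e i0) (e h), neg_inj]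
    rw [Finset.sum_congr rfl fun g _ => by rw [hdiag g h]]
    rw [Finset.sum_congr rfl fun g _ =>
      show Ap f p (e i1) (e i1) (e g) * (if g = h then μ g else 0)
        = if g = h then Ap f p (e i1) (e i1) (e g) * μ g else 0 from by
      by_cases hgh : g = h <;> simp [hgh]]
    rw [Finset.sum_ite_eq' Finset.univ h (fun g => Ap f p (e i1) (e i1) (e g) * μ g)]
    simp
  have hR2 : ∀ h, Ap f p (e i1) (fun d => -∑ g, (if i1 = g then μ i1 else 0) * e g d) (e h)
      = -(μ i1 * Ap f p (e i1) (e i1) (e h)) := by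
    intro h
    rw [ApLin2 hΩo hfS e (fun g => if i1 = g then μ i1 else 0) (e i1) (e h), neg_inj]
    rw [Finset.sum_congr rfl fun g _ =>
      show (if i1 = g then μ i1 else 0) * Ap f p (e i1) (e g) (e h)
        = if i1 = g then μ i1 * Ap f p (e i1) (e g) (e h) else 0 from by
      by_cases hgh : i1 = g <;> simp [hgh]]
    rw [Finset.sum_ite_eq Finset.univ i1 (fun g => μ i1 * Ap f p (e i1) (e g) (e h))]
    simp
  have keyL2 : (∑ h, Ap f p (e i0)
        (fun d => -∑ g, Ap f p (e i1) (e i1) (e g) * e g d) (e h)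
        * Ap f p (e h) (e i1) (e i1))
      = ∑ h, -(Ap f p (e i1) (e i1) (e h) * μ h) * Ap f p (e h) (e i1) (e i1) :=
    Finset.sum_congr rfl fun h _ => by rw [hL2 h]
  have keyR2 : (∑ h, Ap f p (e i1)
        (fun d => -∑ g, (if i1 = g then μ i1 else 0) * e g d) (e h)
        * Ap f p (e h) (e i1) (e i1))
      = ∑ h, -(μ i1 * Ap f p (e i1) (e i1) (e h)) * Ap f p (e h) (e i1) (e i1) :=
    Finset.sum_congr rfl fun h _ => by rw [hR2 h]
  rw [keyL2, keyR2] at key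
  -- now key : -∑ h, -(cc h * μ h) * D h = -∑ h, -(μ i1 * cc h) * D h
  have hrot : ∀ h, Ap f p (e h) (e i1) (e i1) = Ap f p (e i1) (e i1) (e h) :=
    fun h => Ap_rot hΩo hfS hp (e h) (e i1) (e i1)
  have key2 : ∑ h, (Ap f p (e i1) (e i1) (e h))^2 * (μ h - μ i1) = 0 := by
    rw [neg_inj] at key
    have l1 : ∑ h, (Ap f p (e i1) (e i1) (e h))^2 * (μ h - μ i1)
        = ∑ h, (-(μ i1 * Ap f p (e i1) (e i1) (e h)) * Ap f p (e h) (e i1) (e i1)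
          - -(Ap f p (e i1) (e i1) (e h) * μ h) * Ap f p (e h) (e i1) (e i1)) := by
      refine Finset.sum_congr rfl fun h _ => ?_
      rw [hrot h]
      ring
    rw [l1, Finset.sum_sub_distrib, ← key, sub_self]
  have hc0 : Ap f p (e i1) (e i1) (e i0) = μ i1 := by
    rw [← hrot i0, hdiag i1 i1]
    simp
  have hsingle : ∑ h, (Ap f p (e i1) (e i1) (e h))^2 * (μ h - μ i1)
      = (Ap f p (e i1) (e i1) (e i0))^2 * (μ i0 - μ i1) := by
    refine Finset.sum_eq_single i0 ?_ ?_
    · intro h _ hh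
      rw [(hhalf h hh).1, hμ1, sub_self, mul_zero]
    · intro habs
      exact absurd (Finset.mem_univ i0) habs
  rw [hsingle, hc0] at key2
  have h3 : μ i0 - μ i1 = μ i1 := by linarith [hμ1]
  rw [h3] at key2
  have hpos : 0 < (μ i1)^2 * μ i1 := by positivity
  linarith [key2, hpos]

end
end
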